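/- arXiv:2001.01567 — 5 statements merged into one kernel-verified Lean document; each statement's English description precedes it below -/
import Mathlib

section
/- Let 0 < α < 1, 0 ≤ β ≤ 1, γ = α + β(1−α), and suppose ω ∈ C_{1−γ;ψ}[a,b] is such that D_{a+}^{γ;ψ}ω exists and belongs to C_{1−γ;ψ}[a,b]. Then for every t ∈ (a,b], I_{a+}^{γ;ψ}( D_{a+}^{γ;ψ} ω )(t) = I_{a+}^{α;ψ}( ^H D_{a+}^{α,β;ψ} ω )(t). -/
/-!
Since `(1 - β)(1 - α) = 1 - γ`, the ψ-Hilfer derivative of `ω` is `I^{β(1-α);ψ}` applied to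
`g = D^{γ;ψ} ω`, and since `γ = α + β(1-α)` the claim is the semigroup law
`I^{α;ψ} I^{δ;ψ} g = I^{α+δ;ψ} g` with `δ = β(1-α)`. The semigroup law is Fubini on the
triangle `a < τ < s < t` together with the Beta integral
`∫_τ^t ψ'(s) (ψ t - ψ s)^(α-1) (ψ s - ψ τ)^(δ-1) ds = B(α,δ) (ψ t - ψ τ)^(α+δ-1)`,
which the substitution `u = ψ s` reduces to Euler's. Fubini applies because `g ∈ C_{1-γ;ψ}` is
`(ψ - ψ a)^(γ-1)` times a bounded function, so that a second Beta integral makes `I^{γ;ψ}|g|`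
finite.
-/

open Real MeasureTheory Set Filter Topology

/-- The ψ-Riemann–Liouville fractional integral of order `α` with base point `a`.
(By convention, order `0` gives the identity.) -/
noncomputable def psiInt (ψ ψ' : ℝ → ℝ) (a α : ℝ) (ω : ℝ → ℝ) (t : ℝ) : ℝ :=
  if α = 0 then ω t
  else (Real.Gamma α)⁻¹ * ∫ s in a..t, ψ' s * (ψ t - ψ s) ^ (α - 1) * ω s

/-- The ψ-Riemann–Liouville fractional derivative of order `γ`. -/
noncomputable def psiRLD (ψ ψ' : ℝ → ℝ) (a γ : ℝ) (ω : ℝ → ℝ) (t : ℝ) : ℝ :=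
  (ψ' t)⁻¹ * deriv (psiInt ψ ψ' a (1 - γ) ω) t

/-- The ψ-Hilfer fractional derivative of order `α` and type `β`. -/
noncomputable def psiHilferD (ψ ψ' : ℝ → ℝ) (a α β : ℝ) (ω : ℝ → ℝ) (t : ℝ) : ℝ :=
  psiInt ψ ψ' a (β * (1 - α))
    (fun τ => (ψ' τ)⁻¹ * deriv (psiInt ψ ψ' a ((1 - β) * (1 - α)) ω) τ) t

open ProbabilityTheory (beta beta_eq_betaIntegralReal beta_pos)

theorem intervalIntegral_rpow_mul_one_sub_rpow {p q : ℝ} (hp : 0 < p) (hq : 0 < q) :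
    ∫ x in (0 : ℝ)..1, x ^ (p - 1) * (1 - x) ^ (q - 1) = beta p q := by
  have hofReal : Complex.betaIntegral p q
      = ((∫ x in (0 : ℝ)..1, x ^ (p - 1) * (1 - x) ^ (q - 1) : ℝ) : ℂ) := by
    rw [Complex.betaIntegral, ← intervalIntegral.integral_ofReal]
    refine intervalIntegral.integral_congr fun x hx => ?_
    rw [uIcc_of_le zero_le_one] at hx
    push_cast
    rw [Complex.ofReal_cpow hx.1, Complex.ofReal_cpow (sub_nonneg.2 hx.2)]
    push_cast
    ring
  rw [beta_eq_betaIntegralReal p q hp hq, hofReal, Complex.ofReal_re]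

theorem integral_Ioo_sub_rpow_mul_sub_rpow {p q c d : ℝ} (hp : 0 < p) (hq : 0 < q)
    (hcd : c < d) :
    ∫ u in Ioo c d, (d - u) ^ (p - 1) * (u - c) ^ (q - 1) = (d - c) ^ (p + q - 1) * beta p q := by
  have hdc : 0 < d - c := sub_pos.2 hcd
  have hsubst := intervalIntegral.integral_comp_mul_add
    (fun u => (d - u) ^ (p - 1) * (u - c) ^ (q - 1)) hdc.ne' c (a := 0) (b := 1)
  simp only [mul_zero, zero_add, mul_one, sub_add_cancel] at hsubst
  have hscaled : ∫ x in (0 : ℝ)..1,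
        (d - ((d - c) * x + c)) ^ (p - 1) * ((d - c) * x + c - c) ^ (q - 1)
      = (d - c) ^ (p - 1) * (d - c) ^ (q - 1) * beta q p := by
    rw [← intervalIntegral_rpow_mul_one_sub_rpow hq hp, ← intervalIntegral.integral_const_mul]
    refine intervalIntegral.integral_congr fun x hx => ?_
    rw [uIcc_of_le zero_le_one] at hx
    rw [show d - ((d - c) * x + c) = (d - c) * (1 - x) by ring, add_sub_cancel_right,
      mul_rpow hdc.le (sub_nonneg.2 hx.2), mul_rpow hdc.le hx.1]
    ring
  have hbeta_comm : beta q p = beta p q := by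
    rw [beta, beta, mul_comm, add_comm]
  rw [hscaled, smul_eq_mul, eq_inv_mul_iff_mul_eq₀ hdc.ne'] at hsubst
  rw [← integral_Ioc_eq_integral_Ioo, ← intervalIntegral.integral_of_le hcd.le, ← hsubst,
    show p + q - 1 = 1 + (p - 1) + (q - 1) by ring, rpow_add hdc, rpow_add hdc, rpow_one,
    hbeta_comm]
  ring

theorem HasDerivAt.nonneg_of_monotoneOn_of_mem_nhds {g : ℝ → ℝ} {g' x : ℝ} {s : Set ℝ}
    (hd : HasDerivAt g g' x) (hg : MonotoneOn g s) (hs : s ∈ 𝓝 x) : 0 ≤ g' := by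
  refine hd.hasDerivWithinAt.nonneg_of_monotoneOn (accPt_iff_nhds.2 fun U hU => ?_) hg
  obtain ⟨y, ⟨⟨hyU, hys⟩, -⟩, hyx⟩ :=
    accPt_iff_nhds.1 (PerfectSpace.univ_preperfect x (mem_univ x)) (U ∩ s) (inter_mem hU hs)
  exact ⟨y, ⟨hyU, hys⟩, hyx⟩

structure StrictMonoHasDerivOn (ψ ψ' : ℝ → ℝ) (c d : ℝ) : Prop where
  continuousOn : ContinuousOn ψ (Icc c d)
  hasDerivAt : ∀ x ∈ Ioo c d, HasDerivAt ψ (ψ' x) x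
  strictMonoOn : StrictMonoOn ψ (Icc c d)

namespace StrictMonoHasDerivOn

variable {ψ ψ' : ℝ → ℝ} {c d : ℝ}

theorem of_hasDerivWithinAt (hψ : ∀ x ∈ Icc c d, HasDerivWithinAt ψ (ψ' x) (Icc c d) x)
    (hmono : StrictMonoOn ψ (Icc c d)) : StrictMonoHasDerivOn ψ ψ' c d where
  continuousOn x hx := (hψ x hx).continuousWithinAt
  hasDerivAt x hx := (hψ x (Ioo_subset_Icc_self hx)).hasDerivAt (Icc_mem_nhds hx.1 hx.2)
  strictMonoOn := hmono

theorem mono (h : StrictMonoHasDerivOn ψ ψ' c d) {c' d' : ℝ} (hc : c ≤ c') (hd : d' ≤ d) :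
    StrictMonoHasDerivOn ψ ψ' c' d' where
  continuousOn := h.continuousOn.mono (Icc_subset_Icc hc hd)
  hasDerivAt x hx := h.hasDerivAt x (Ioo_subset_Ioo hc hd hx)
  strictMonoOn := h.strictMonoOn.mono (Icc_subset_Icc hc hd)

theorem deriv_nonneg (h : StrictMonoHasDerivOn ψ ψ' c d) {x : ℝ} (hx : x ∈ Ioo c d) :
    0 ≤ ψ' x :=
  (h.hasDerivAt x hx).nonneg_of_monotoneOn_of_mem_nhds h.strictMonoOn.monotoneOn
    (Icc_mem_nhds hx.1 hx.2)

theorem sub_nonneg_of_le (h : StrictMonoHasDerivOn ψ ψ' c d) {x y : ℝ} (hx : x ∈ Icc c d)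
    (hy : y ∈ Icc c d) (hxy : x ≤ y) : 0 ≤ ψ y - ψ x :=
  sub_nonneg.2 (h.strictMonoOn.monotoneOn hx hy hxy)

theorem integral_Ioo_deriv_mul_sub_rpow_mul_sub_rpow (h : StrictMonoHasDerivOn ψ ψ' c d)
    (hcd : c < d) {p q : ℝ} (hp : 0 < p) (hq : 0 < q) :
    ∫ s in Ioo c d, ψ' s * ((ψ d - ψ s) ^ (p - 1) * (ψ s - ψ c) ^ (q - 1))
      = (ψ d - ψ c) ^ (p + q - 1) * beta p q := by
  have hsubst := integral_image_eq_integral_abs_deriv_smul measurableSet_Ioo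
    (fun x hx => (h.hasDerivAt x hx).hasDerivWithinAt)
    (h.strictMonoOn.mono Ioo_subset_Icc_self).injOn
    (fun u => (ψ d - u) ^ (p - 1) * (u - ψ c) ^ (q - 1))
  rw [h.continuousOn.image_Ioo_of_strictMonoOn hcd.le h.strictMonoOn,
    integral_Ioo_sub_rpow_mul_sub_rpow hp hq (h.strictMonoOn (left_mem_Icc.2 hcd.le)
      (right_mem_Icc.2 hcd.le) hcd)] at hsubst
  rw [hsubst]
  refine setIntegral_congr_fun measurableSet_Ioo fun x hx => ?_
  rw [abs_of_nonneg (h.deriv_nonneg hx), smul_eq_mul]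

theorem integrableOn_deriv_mul_sub_rpow_mul_sub_rpow (h : StrictMonoHasDerivOn ψ ψ' c d)
    (hcd : c < d) {p q : ℝ} (hp : 0 < p) (hq : 0 < q) :
    IntegrableOn (fun s => ψ' s * ((ψ d - ψ s) ^ (p - 1) * (ψ s - ψ c) ^ (q - 1)))
      (Ioo c d) := by
  -- a function whose integral is nonzero is integrable, the integral of any other being `0`
  refine Integrable.of_integral_ne_zero ?_
  rw [h.integral_Ioo_deriv_mul_sub_rpow_mul_sub_rpow hcd hp hq]
  have hψcd : 0 < ψ d - ψ c :=
    sub_pos.2 (h.strictMonoOn (left_mem_Icc.2 hcd.le) (right_mem_Icc.2 hcd.le) hcd)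
  exact (mul_pos (rpow_pos_of_pos hψcd _) (beta_pos hp hq)).ne'

theorem deriv_mul_sub_rpow_mul_sub_rpow_nonneg (h : StrictMonoHasDerivOn ψ ψ' c d)
    {p q s : ℝ} (hs : s ∈ Ioo c d) :
    0 ≤ ψ' s * ((ψ d - ψ s) ^ (p - 1) * (ψ s - ψ c) ^ (q - 1)) := by
  have hcd : c ≤ d := hs.1.le.trans hs.2.le
  have hs' := Ioo_subset_Icc_self hs
  exact mul_nonneg (h.deriv_nonneg hs) (mul_nonneg
    (rpow_nonneg (h.sub_nonneg_of_le hs' (right_mem_Icc.2 hcd) hs.2.le) _)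
    (rpow_nonneg (h.sub_nonneg_of_le (left_mem_Icc.2 hcd) hs' hs.1.le) _))

end StrictMonoHasDerivOn

section Triangle

variable {E : Type*} [NormedAddCommGroup E]

theorem setIntegral_Ioo_ite_lt [NormedSpace ℝ E] {h : ℝ → E} {a s t : ℝ} (hst : s ≤ t) :
    ∫ τ in Ioo a t, (if τ < s then h τ else 0) = ∫ τ in Ioo a s, h τ := by
  have := setIntegral_indicator (μ := volume) (s := Ioo a t) (f := h)
    (measurableSet_Iio (a := s))
  rwa [Ioo_inter_Iio, min_eq_right hst] at this

theorem setIntegral_Ioo_ite_gt [NormedSpace ℝ E] {h : ℝ → E} {a τ t : ℝ} (haτ : a ≤ τ) :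
    ∫ s in Ioo a t, (if τ < s then h s else 0) = ∫ s in Ioo τ t, h s := by
  have := setIntegral_indicator (μ := volume) (s := Ioo a t) (f := h)
    (measurableSet_Ioi (a := τ))
  rwa [Ioo_inter_Ioi, max_eq_right haτ] at this

theorem integrable_ite_gt_iff {h : ℝ → E} {a τ t : ℝ} (haτ : a ≤ τ) :
    Integrable (fun s => if τ < s then h s else 0) (volume.restrict (Ioo a t))
      ↔ IntegrableOn h (Ioo τ t) := by
  have := integrable_indicator_iff (μ := volume.restrict (Ioo a t)) (f := h)
    (measurableSet_Ioi (a := τ))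
  rwa [IntegrableOn, Measure.restrict_restrict measurableSet_Ioi, Ioi_inter_Ioo,
    max_eq_left haτ] at this

theorem integral_Ioo_integral_Ioo_swap [NormedSpace ℝ E] [CompleteSpace E] {f : ℝ → ℝ → E}
    {a t : ℝ} (hf : Integrable (fun p : ℝ × ℝ => if p.2 < p.1 then f p.1 p.2 else 0)
      ((volume.restrict (Ioo a t)).prod (volume.restrict (Ioo a t)))) :
    ∫ s in Ioo a t, ∫ τ in Ioo a s, f s τ = ∫ τ in Ioo a t, ∫ s in Ioo τ t, f s τ := calc
  _ = ∫ s in Ioo a t, ∫ τ in Ioo a t, (if τ < s then f s τ else 0) :=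
    setIntegral_congr_fun measurableSet_Ioo fun _ hs => (setIntegral_Ioo_ite_lt hs.2.le).symm
  _ = ∫ τ in Ioo a t, ∫ s in Ioo a t, (if τ < s then f s τ else 0) := integral_integral_swap hf
  _ = _ := setIntegral_congr_fun measurableSet_Ioo fun _ hτ => setIntegral_Ioo_ite_gt hτ.1.le

end Triangle

section Semigroup

variable {ψ ψ' g : ℝ → ℝ} {a t α δ : ℝ}

theorem psiInt_zero {ω : ℝ → ℝ} : psiInt ψ ψ' a 0 ω = ω :=
  funext fun _ => if_pos rfl

theorem psiInt_eq_setIntegral {ω : ℝ → ℝ} (hat : a ≤ t) (hα : α ≠ 0) :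
    psiInt ψ ψ' a α ω t
      = (Gamma α)⁻¹ * ∫ s in Ioo a t, ψ' s * (ψ t - ψ s) ^ (α - 1) * ω s := by
  rw [psiInt, if_neg hα, intervalIntegral.integral_of_le hat, integral_Ioc_eq_integral_Ioo]

theorem aestronglyMeasurable_psiInt_kernel (hψ : StrictMonoHasDerivOn ψ ψ' a t)
    (hg : AEMeasurable g (volume.restrict (Ioo a t))) :
    AEStronglyMeasurable (fun p : ℝ × ℝ => if p.2 < p.1 then
        ψ' p.1 * (ψ t - ψ p.1) ^ (α - 1) * (ψ' p.2 * (ψ p.1 - ψ p.2) ^ (δ - 1) * g p.2) else 0)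
      ((volume.restrict (Ioo a t)).prod (volume.restrict (Ioo a t))) := by
  have hψm : AEMeasurable ψ (volume.restrict (Ioo a t)) :=
    (hψ.continuousOn.mono Ioo_subset_Icc_self).aemeasurable measurableSet_Ioo
  have hψ'm : AEMeasurable ψ' (volume.restrict (Ioo a t)) :=
    (measurable_deriv ψ).aemeasurable.congr <|
      (ae_restrict_iff' measurableSet_Ioo).2 (.of_forall fun x hx => (hψ.hasDerivAt x hx).deriv)
  refine AEMeasurable.aestronglyMeasurable <| AEMeasurable.indicator ?_
    (measurableSet_lt measurable_snd measurable_fst)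
  exact (hψ'm.comp_fst.mul ((hψm.comp_fst.const_sub (ψ t)).pow_const (α - 1))).mul
    ((hψ'm.comp_snd.mul ((hψm.comp_fst.sub hψm.comp_snd).pow_const (δ - 1))).mul hg.comp_snd)

theorem integrable_psiInt_kernel (hψ : StrictMonoHasDerivOn ψ ψ' a t) (hα : 0 < α)
    (hδ : 0 < δ) (hg : AEMeasurable g (volume.restrict (Ioo a t)))
    (hint : IntegrableOn (fun τ => ψ' τ * (ψ t - ψ τ) ^ (α + δ - 1) * g τ) (Ioo a t)) :
    Integrable (fun p : ℝ × ℝ => if p.2 < p.1 then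
        ψ' p.1 * (ψ t - ψ p.1) ^ (α - 1) * (ψ' p.2 * (ψ p.1 - ψ p.2) ^ (δ - 1) * g p.2) else 0)
      ((volume.restrict (Ioo a t)).prod (volume.restrict (Ioo a t))) := by
  refine (integrable_prod_iff' (aestronglyMeasurable_psiInt_kernel hψ hg)).2 ⟨?_, ?_⟩
  · filter_upwards [ae_restrict_mem measurableSet_Ioo] with τ hτ
    rw [integrable_ite_gt_iff hτ.1.le]
    have hbeta := (hψ.mono hτ.1.le le_rfl).integrableOn_deriv_mul_sub_rpow_mul_sub_rpow hτ.2 hα hδ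
    exact IntegrableOn.congr_fun (hbeta.mul_const (ψ' τ * g τ)) (fun s _ => by ring)
      measurableSet_Ioo
  · refine (hint.norm.const_mul (beta α δ)).congr ?_
    filter_upwards [ae_restrict_mem measurableSet_Ioo] with τ hτ
    have hψτ := hψ.mono hτ.1.le le_rfl
    have hψtτ : 0 ≤ ψ t - ψ τ := hψ.sub_nonneg_of_le (Ioo_subset_Icc_self hτ)
      (right_mem_Icc.2 (hτ.1.trans hτ.2).le) hτ.2.le
    have hnorm : ∀ s ∈ Ioo τ t,
        ‖ψ' s * (ψ t - ψ s) ^ (α - 1) * (ψ' τ * (ψ s - ψ τ) ^ (δ - 1) * g τ)‖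
          = ψ' s * ((ψ t - ψ s) ^ (α - 1) * (ψ s - ψ τ) ^ (δ - 1)) * ‖ψ' τ * g τ‖ :=
      fun s hs => by
        rw [← Real.norm_of_nonneg (hψτ.deriv_mul_sub_rpow_mul_sub_rpow_nonneg hs), ← norm_mul]
        ring_nf
    simp only [apply_ite norm, norm_zero]
    rw [setIntegral_Ioo_ite_gt hτ.1.le, setIntegral_congr_fun measurableSet_Ioo hnorm,
      integral_mul_const, hψτ.integral_Ioo_deriv_mul_sub_rpow_mul_sub_rpow hτ.2 hα hδ, norm_mul,
      norm_mul, norm_mul, Real.norm_of_nonneg (rpow_nonneg hψtτ _)]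
    ring

theorem psiInt_psiInt_eq_psiInt_add (hat : a < t) (hψ : StrictMonoHasDerivOn ψ ψ' a t)
    (hα : 0 < α) (hδ : 0 < δ) (hg : AEMeasurable g (volume.restrict (Ioo a t)))
    (hint : IntegrableOn (fun τ => ψ' τ * (ψ t - ψ τ) ^ (α + δ - 1) * g τ) (Ioo a t)) :
    psiInt ψ ψ' a α (psiInt ψ ψ' a δ g) t = psiInt ψ ψ' a (α + δ) g t := by
  have hinner : ∀ τ ∈ Ioo a t,
      ∫ s in Ioo τ t, ψ' s * (ψ t - ψ s) ^ (α - 1) * (ψ' τ * (ψ s - ψ τ) ^ (δ - 1) * g τ)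
        = beta α δ * (ψ' τ * (ψ t - ψ τ) ^ (α + δ - 1) * g τ) := fun τ hτ => by
    have hbeta :=
      (hψ.mono hτ.1.le le_rfl).integral_Ioo_deriv_mul_sub_rpow_mul_sub_rpow hτ.2 hα hδ
    calc _ = (∫ s in Ioo τ t, ψ' s * ((ψ t - ψ s) ^ (α - 1) * (ψ s - ψ τ) ^ (δ - 1)))
          * (ψ' τ * g τ) := by
          rw [← integral_mul_const]
          congr 1
          ext s
          ring
      _ = _ := by
          rw [hbeta]
          ring
  calc psiInt ψ ψ' a α (psiInt ψ ψ' a δ g) t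
      = (Gamma α)⁻¹ * (Gamma δ)⁻¹ * ∫ s in Ioo a t, ∫ τ in Ioo a s,
          ψ' s * (ψ t - ψ s) ^ (α - 1) * (ψ' τ * (ψ s - ψ τ) ^ (δ - 1) * g τ) := by
        rw [psiInt_eq_setIntegral hat.le hα.ne', mul_assoc, ← integral_const_mul (Gamma δ)⁻¹]
        congr 1
        refine setIntegral_congr_fun measurableSet_Ioo fun s hs => ?_
        rw [psiInt_eq_setIntegral hs.1.le hδ.ne', integral_const_mul]
        ring
    _ = (Gamma α)⁻¹ * (Gamma δ)⁻¹ * ∫ τ in Ioo a t, ∫ s in Ioo τ t,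
          ψ' s * (ψ t - ψ s) ^ (α - 1) * (ψ' τ * (ψ s - ψ τ) ^ (δ - 1) * g τ) := by
        rw [integral_Ioo_integral_Ioo_swap (integrable_psiInt_kernel hψ hα hδ hg hint)]
    _ = (Gamma α)⁻¹ * (Gamma δ)⁻¹ * ∫ τ in Ioo a t,
          beta α δ * (ψ' τ * (ψ t - ψ τ) ^ (α + δ - 1) * g τ) := by
        rw [setIntegral_congr_fun measurableSet_Ioo hinner]
    _ = psiInt ψ ψ' a (α + δ) g t := by
        have := (Gamma_pos_of_pos hα).ne'
        have := (Gamma_pos_of_pos hδ).ne'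
        rw [integral_const_mul, psiInt_eq_setIntegral hat.le (by positivity), beta]
        field_simp

end Semigroup

section WeightedSpace

variable {ψ ψ' g W : ℝ → ℝ} {a t γ : ℝ}

theorem eqOn_rpow_mul_of_eq_rpow_mul (hmono : StrictMonoOn ψ (Icc a t))
    (hW : ∀ τ ∈ Ioc a t, W τ = (ψ τ - ψ a) ^ (1 - γ) * g τ) :
    EqOn g (fun τ => (ψ τ - ψ a) ^ (γ - 1) * W τ) (Ioc a t) := fun τ hτ => by
  have hpos : 0 < ψ τ - ψ a :=
    sub_pos.2 (hmono (left_mem_Icc.2 (hτ.1.trans_le hτ.2).le) (Ioc_subset_Icc_self hτ) hτ.1)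
  dsimp only
  rw [hW τ hτ, ← mul_assoc, ← rpow_add hpos, sub_add_sub_cancel', sub_self, rpow_zero, one_mul]

theorem StrictMonoHasDerivOn.aemeasurable_of_eqOn (hψ : StrictMonoHasDerivOn ψ ψ' a t)
    (hWc : ContinuousOn W (Icc a t))
    (hg : EqOn g (fun τ => (ψ τ - ψ a) ^ (γ - 1) * W τ) (Ioo a t)) :
    AEMeasurable g (volume.restrict (Ioo a t)) := by
  have hψm := (hψ.continuousOn.mono Ioo_subset_Icc_self).aemeasurable (μ := volume)
    measurableSet_Ioo
  have hWm := (hWc.mono Ioo_subset_Icc_self).aemeasurable (μ := volume) measurableSet_Ioo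
  exact (((hψm.sub_const (ψ a)).pow_const (γ - 1)).mul hWm).congr
    ((ae_restrict_iff' measurableSet_Ioo).2 (.of_forall fun _ hτ => (hg hτ).symm))

theorem StrictMonoHasDerivOn.integrableOn_of_eqOn (hψ : StrictMonoHasDerivOn ψ ψ' a t)
    (hat : a < t) (hγ : 0 < γ) (hWc : ContinuousOn W (Icc a t))
    (hg : EqOn g (fun τ => (ψ τ - ψ a) ^ (γ - 1) * W τ) (Ioo a t)) :
    IntegrableOn (fun τ => ψ' τ * (ψ t - ψ τ) ^ (γ - 1) * g τ) (Ioo a t) := by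
  have hbeta := hψ.integrableOn_deriv_mul_sub_rpow_mul_sub_rpow hat hγ hγ
  exact IntegrableOn.congr_fun (hbeta.mul_continuousOn_of_subset hWc measurableSet_Ioo
    isCompact_Icc Ioo_subset_Icc_self) (fun τ hτ => by rw [hg hτ]; ring) measurableSet_Ioo

end WeightedSpace

theorem psiHilferD_eq_psiInt_psiRLD {ψ ψ' ω : ℝ → ℝ} {a α β γ : ℝ}
    (hγ : γ = α + β * (1 - α)) :
    psiHilferD ψ ψ' a α β ω = psiInt ψ ψ' a (β * (1 - α)) (psiRLD ψ ψ' a γ ω) := by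
  have h : (1 - β) * (1 - α) = 1 - γ := by rw [hγ]; ring
  funext t
  rw [psiHilferD, h]
  rfl

theorem psiInt_psiRLD_eq_psiInt_psiHilferD_general
    (a b : ℝ) (ψ ψ' : ℝ → ℝ)
    (hψ : ∀ t ∈ Icc a b, HasDerivWithinAt ψ (ψ' t) (Icc a b) t)
    (hψmono : StrictMonoOn ψ (Icc a b))
    (α β γ : ℝ) (hα0 : 0 < α) (hα1 : α < 1) (hβ0 : 0 ≤ β)
    (hγ : γ = α + β * (1 - α))
    (ω : ℝ → ℝ)
    (hD : ∃ W : ℝ → ℝ, ContinuousOn W (Icc a b) ∧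
      ∀ t ∈ Ioc a b, W t = (ψ t - ψ a) ^ (1 - γ) * psiRLD ψ ψ' a γ ω t) :
    ∀ t ∈ Ioc a b,
      psiInt ψ ψ' a γ (psiRLD ψ ψ' a γ ω) t
        = psiInt ψ ψ' a α (psiHilferD ψ ψ' a α β ω) t := by
  intro t ht
  obtain ⟨W, hWc, hW⟩ := hD
  rw [psiHilferD_eq_psiInt_psiRLD hγ]
  rcases hβ0.eq_or_lt with rfl | hβ
  · rw [zero_mul, add_zero] at hγ
    rw [zero_mul, psiInt_zero, hγ]
  have hψt := (StrictMonoHasDerivOn.of_hasDerivWithinAt hψ hψmono).mono le_rfl ht.2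
  have hWt := hWc.mono (Icc_subset_Icc_right ht.2)
  have hδ : 0 < β * (1 - α) := mul_pos hβ (sub_pos.2 hα1)
  have hg := (eqOn_rpow_mul_of_eq_rpow_mul hψt.strictMonoOn
    fun τ hτ => hW τ (Ioc_subset_Ioc_right ht.2 hτ)).mono Ioo_subset_Ioc_self
  have hint : IntegrableOn (fun τ => ψ' τ * (ψ t - ψ τ) ^ (α + β * (1 - α) - 1) *
      psiRLD ψ ψ' a γ ω τ) (Ioo a t) := by
    rw [← hγ]
    exact hψt.integrableOn_of_eqOn ht.1 (hγ ▸ add_pos hα0 hδ) hWt hg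
  rw [psiInt_psiInt_eq_psiInt_add ht.1 hψt hα0 hδ (hψt.aemeasurable_of_eqOn hWt hg) hint, ← hγ]

/-- `I^{γ;ψ} D^{γ;ψ} ω = I^{α;ψ} {}^H D^{α,β;ψ} ω` for ω in the weighted space
`C_{1-γ;ψ}[a,b]` whose RL-derivative of order γ exists and lies in the same space. -/
theorem psiInt_psiRLD_eq_psiInt_psiHilferD
    (a b : ℝ) (hab : a < b) (ψ ψ' : ℝ → ℝ)
    (hψ : ∀ t ∈ Icc a b, HasDerivWithinAt ψ (ψ' t) (Icc a b) t)
    (hψ'c : ContinuousOn ψ' (Icc a b))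
    (hψ'pos : ∀ t ∈ Icc a b, 0 < ψ' t)
    (hψmono : StrictMonoOn ψ (Icc a b))
    (α β γ : ℝ) (hα0 : 0 < α) (hα1 : α < 1) (hβ0 : 0 ≤ β) (hβ1 : β ≤ 1)
    (hγ : γ = α + β * (1 - α))
    (ω : ℝ → ℝ)
    (hω : ∃ W : ℝ → ℝ, ContinuousOn W (Icc a b) ∧
      ∀ t ∈ Ioc a b, W t = (ψ t - ψ a) ^ (1 - γ) * ω t)
    (hdiff : ∀ t ∈ Ioc a b, DifferentiableAt ℝ (psiInt ψ ψ' a (1 - γ) ω) t)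
    (hD : ∃ W : ℝ → ℝ, ContinuousOn W (Icc a b) ∧
      ∀ t ∈ Ioc a b, W t = (ψ t - ψ a) ^ (1 - γ) * psiRLD ψ ψ' a γ ω t) :
    ∀ t ∈ Ioc a b,
      psiInt ψ ψ' a γ (psiRLD ψ ψ' a γ ω) t
        = psiInt ψ ψ' a α (psiHilferD ψ ψ' a α β ω) t :=
  psiInt_psiRLD_eq_psiInt_psiHilferD_general a b ψ ψ' hψ hψmono α β γ hα0 hα1 hβ0 hγ ω hD
end

section
/- Abstract Gronwall lemma for Picard operators: let (X,d) be a metric space equipped with a partial order ≤ that is closed under limits (if xₙ → x, yₙ → y and xₙ ≤ yₙ for all n, then x ≤ y). Let T : X → X be a monotone increasing Picard operator with fixed point set F_T = {u*}. Then for every u ∈ X, u ≤ T(u) implies u ≤ u*. -/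
open Filter Topology

theorem picard_abstract_gronwall_general {X : Type*} [MetricSpace X] [PartialOrder X]
    (hclosed : ∀ (x y : ℕ → X) (x₀ y₀ : X),
      Tendsto x atTop (𝓝 x₀) → Tendsto y atTop (𝓝 y₀) → (∀ n, x n ≤ y n) → x₀ ≤ y₀)
    (T : X → X) (hT : Monotone T) (ustar : X)
    (hpicard : ∀ u₀ : X, Tendsto (fun n => T^[n] u₀) atTop (𝓝 ustar)) :
    ∀ u : X, u ≤ T u → u ≤ ustar := by
  intro u hu
  have le_iterate : ∀ n, u ≤ T^[n] u := fun n =>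
    hT.monotone_iterate_of_le_map hu (Nat.zero_le n)
  exact hclosed (fun _ => u) (fun n => T^[n] u) u ustar tendsto_const_nhds (hpicard u) le_iterate

/-- Abstract Gronwall lemma for Picard operators: if `(X,d)` is a metric space with a
partial order closed under limits, and `T : X → X` is a monotone increasing Picard
operator with fixed point set `{ustar}`, then `u ≤ T u` implies `u ≤ ustar`. -/
theorem picard_abstract_gronwall {X : Type*} [MetricSpace X] [PartialOrder X]
    (hclosed : ∀ (x y : ℕ → X) (x₀ y₀ : X),
      Tendsto x atTop (𝓝 x₀) → Tendsto y atTop (𝓝 y₀) → (∀ n, x n ≤ y n) → x₀ ≤ y₀)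
    (T : X → X) (hT : Monotone T) (ustar : X)
    (hfix : {u : X | T u = u} = {ustar})
    (hpicard : ∀ u₀ : X, Tendsto (fun n => T^[n] u₀) atTop (𝓝 ustar)) :
    ∀ u : X, u ≤ T u → u ≤ ustar :=
  picard_abstract_gronwall_general hclosed T hT ustar hpicard
end

section
/- Pachpatte's integral inequality: let x, p, q : [0,∞) → ℝ be nonnegative continuous functions and let η : [0,∞) → ℝ be a positive, nondecreasing continuous function, such that for all t ≥ 0, x(t) ≤ η(t) + ∫₀ᵗ p(s)[ x(s) + ∫₀ˢ q(σ) x(σ) dσ ] ds. Then for all t ≥ 0, x(t) ≤ η(t) · [ 1 + ∫₀ᵗ p(s) exp( ∫₀ˢ ( p(σ) + q(σ) ) dσ ) ds ]. -/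
open Real MeasureTheory Set Filter Topology

/-!
On `[0, T]` monotonicity lets us replace `η` by the constant `c = η T`. Let `w = x + ∫ q x`,
let `z = c + ∫ p w` be the right-hand side of the hypothesis (so `x ≤ z`), and `v = z + ∫ q z`.
Then `w ≤ v` and `z ≤ v`, hence `v = c + ∫ (p w + q z) ≤ c + ∫ (p + q) v`, and Grönwall's
inequality gives `v ≤ c exp ∫ (p + q)`. Substituting `w ≤ v` back into `z` yields the bound at `T`.
-/

section Primitive

variable {f : ℝ → ℝ} {a b : ℝ}

lemma ContinuousOn.intervalIntegrable_of_mem_Icc (hf : ContinuousOn f (Icc a b)) {t : ℝ}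
    (ht : t ∈ Icc a b) : IntervalIntegrable f volume a t :=
  (hf.mono (Icc_subset_Icc_right ht.2)).intervalIntegrable_of_Icc ht.1

lemma ContinuousOn.continuousOn_primitive_Icc (hf : ContinuousOn f (Icc a b)) :
    ContinuousOn (fun t => ∫ s in a..t, f s) (Icc a b) := by
  rcases le_or_gt a b with hab | hba
  · rw [← uIcc_of_le hab] at hf ⊢
    exact intervalIntegral.continuousOn_primitive_interval (hf.integrableOn_compact isCompact_uIcc)
  · simp [Icc_eq_empty_of_lt hba]

lemma ContinuousOn.hasDerivAt_primitive (hf : ContinuousOn f (Icc a b)) {t : ℝ}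
    (ht : t ∈ Ioo a b) : HasDerivAt (fun u => ∫ s in a..u, f s) (f t) t :=
  intervalIntegral.integral_hasDerivAt_right
    (hf.intervalIntegrable_of_mem_Icc (Ioo_subset_Icc_self ht))
    ((hf.mono Ioo_subset_Icc_self).stronglyMeasurableAtFilter isOpen_Ioo t ht)
    (hf.continuousAt (Icc_mem_nhds ht.1 ht.2))

end Primitive

theorem le_mul_exp_integral_of_le_add_integral {u k : ℝ → ℝ} {a b c : ℝ}
    (hu : ContinuousOn u (Icc a b)) (hk : ContinuousOn k (Icc a b))
    (hk₀ : ∀ t ∈ Icc a b, 0 ≤ k t) (h : ∀ t ∈ Icc a b, u t ≤ c + ∫ s in a..t, k s * u s) :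
    ∀ t ∈ Icc a b, u t ≤ c * exp (∫ s in a..t, k s) := by
  have hku : ContinuousOn (fun s => k s * u s) (Icc a b) := hk.mul hu
  set R : ℝ → ℝ := fun t => c + ∫ s in a..t, k s * u s
  set K : ℝ → ℝ := fun t => ∫ s in a..t, k s
  -- `R e^{-K}` is antitone since `R' = k u ≤ k R`.
  have hanti : AntitoneOn (fun t => R t * exp (-K t)) (Icc a b) := by
    refine antitoneOn_of_hasDerivWithinAt_nonpos (convex_Icc a b)
      ((continuousOn_const.add hku.continuousOn_primitive_Icc).mul
        hk.continuousOn_primitive_Icc.neg.rexp)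
      (fun t ht => ?_) (f' := fun t => (k t * u t - k t * R t) * exp (-K t)) (fun t ht => ?_)
    all_goals rw [interior_Icc] at ht
    · have hR : HasDerivAt R (k t * u t) t := (hku.hasDerivAt_primitive ht).const_add c
      have hK : HasDerivAt K (k t) t := hk.hasDerivAt_primitive ht
      have hW : HasDerivAt (fun t => R t * exp (-K t))
          (k t * u t * exp (-K t) + R t * (exp (-K t) * -k t)) t := hR.mul hK.neg.exp
      exact hW.hasDerivWithinAt.congr_deriv (by ring)
    · have ht' := Ioo_subset_Icc_self ht
      have := mul_le_mul_of_nonneg_left (h t ht') (hk₀ t ht')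
      exact mul_nonpos_of_nonpos_of_nonneg (by linarith) (exp_pos _).le
  intro t ht
  have hRK : R t * exp (-K t) ≤ c := by
    simpa [R, K] using hanti (left_mem_Icc.2 (ht.1.trans ht.2)) ht ht.1
  calc u t ≤ R t := h t ht
    _ = R t * exp (-K t) * exp (K t) := by rw [mul_assoc, ← exp_add]; simp
    _ ≤ c * exp (K t) := mul_le_mul_of_nonneg_right hRK (exp_pos _).le

theorem pachpatte_inner_le_mul_exp {x p q : ℝ → ℝ} {a b c : ℝ}
    (hx : ContinuousOn x (Icc a b)) (hp : ContinuousOn p (Icc a b))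
    (hq : ContinuousOn q (Icc a b)) (hx₀ : ∀ t ∈ Icc a b, 0 ≤ x t)
    (hp₀ : ∀ t ∈ Icc a b, 0 ≤ p t) (hq₀ : ∀ t ∈ Icc a b, 0 ≤ q t)
    (h : ∀ t ∈ Icc a b, x t ≤ c + ∫ s in a..t, p s * (x s + ∫ σ in a..s, q σ * x σ)) :
    ∀ t ∈ Icc a b, x t + ∫ σ in a..t, q σ * x σ ≤ c * exp (∫ σ in a..t, (p σ + q σ)) := by
  have sub : ∀ {t s}, t ∈ Icc a b → s ∈ Icc a t → s ∈ Icc a b :=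
    fun ht hs => Icc_subset_Icc_right ht.2 hs
  set w : ℝ → ℝ := fun s => x s + ∫ σ in a..s, q σ * x σ
  set z : ℝ → ℝ := fun t => c + ∫ s in a..t, p s * w s
  set v : ℝ → ℝ := fun t => z t + ∫ s in a..t, q s * z s
  have hqx : ContinuousOn (fun s => q s * x s) (Icc a b) := hq.mul hx
  have hpw : ContinuousOn (fun s => p s * w s) (Icc a b) :=
    hp.mul (hx.add hqx.continuousOn_primitive_Icc)
  have hz : ContinuousOn z (Icc a b) := continuousOn_const.add hpw.continuousOn_primitive_Icc
  have hqz : ContinuousOn (fun s => q s * z s) (Icc a b) := hq.mul hz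
  have hv : ContinuousOn v (Icc a b) := hz.add hqz.continuousOn_primitive_Icc
  have hxz : ∀ t ∈ Icc a b, x t ≤ z t := h
  have hwv : ∀ t ∈ Icc a b, w t ≤ v t := fun t ht =>
    add_le_add (hxz t ht) <| intervalIntegral.integral_mono_on ht.1
      (hqx.intervalIntegrable_of_mem_Icc ht) (hqz.intervalIntegrable_of_mem_Icc ht)
      fun s hs => mul_le_mul_of_nonneg_left (hxz s (sub ht hs)) (hq₀ s (sub ht hs))
  have hzv : ∀ t ∈ Icc a b, z t ≤ v t := fun t ht =>
    le_add_of_nonneg_right <| intervalIntegral.integral_nonneg ht.1 fun s hs =>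
      mul_nonneg (hq₀ s (sub ht hs)) ((hx₀ s (sub ht hs)).trans (hxz s (sub ht hs)))
  have hv_le : ∀ t ∈ Icc a b, v t ≤ c + ∫ s in a..t, (p s + q s) * v s := by
    intro t ht
    calc v t = c + ∫ s in a..t, (p s * w s + q s * z s) := by
          rw [intervalIntegral.integral_add (hpw.intervalIntegrable_of_mem_Icc ht)
            (hqz.intervalIntegrable_of_mem_Icc ht)]
          ring
      _ ≤ c + ∫ s in a..t, (p s + q s) * v s := by
          gcongr
          refine intervalIntegral.integral_mono_on ht.1
            ((hpw.add hqz).intervalIntegrable_of_mem_Icc ht)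
            (((hp.add hq).mul hv).intervalIntegrable_of_mem_Icc ht) fun s hs => ?_
          have hs' := sub ht hs
          rw [add_mul]
          exact add_le_add (mul_le_mul_of_nonneg_left (hwv s hs') (hp₀ s hs'))
            (mul_le_mul_of_nonneg_left (hzv s hs') (hq₀ s hs'))
  exact fun t ht => (hwv t ht).trans <| le_mul_exp_integral_of_le_add_integral hv (hp.add hq)
    (fun t ht => add_nonneg (hp₀ t ht) (hq₀ t ht)) hv_le t ht

theorem pachpatte_inequality_const {x p q : ℝ → ℝ} {a b c : ℝ}
    (hx : ContinuousOn x (Icc a b)) (hp : ContinuousOn p (Icc a b))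
    (hq : ContinuousOn q (Icc a b)) (hx₀ : ∀ t ∈ Icc a b, 0 ≤ x t)
    (hp₀ : ∀ t ∈ Icc a b, 0 ≤ p t) (hq₀ : ∀ t ∈ Icc a b, 0 ≤ q t)
    (h : ∀ t ∈ Icc a b, x t ≤ c + ∫ s in a..t, p s * (x s + ∫ σ in a..s, q σ * x σ)) :
    ∀ t ∈ Icc a b, x t ≤ c * (1 + ∫ s in a..t, p s * exp (∫ σ in a..s, (p σ + q σ))) := by
  have hinner := pachpatte_inner_le_mul_exp hx hp hq hx₀ hp₀ hq₀ h
  have hpw : ContinuousOn (fun s => p s * (x s + ∫ σ in a..s, q σ * x σ)) (Icc a b) :=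
    hp.mul (hx.add (hq.mul hx).continuousOn_primitive_Icc)
  have hpE : ContinuousOn (fun s => p s * exp (∫ σ in a..s, (p σ + q σ))) (Icc a b) :=
    hp.mul (hp.add hq).continuousOn_primitive_Icc.rexp
  intro t ht
  calc x t ≤ c + ∫ s in a..t, p s * (x s + ∫ σ in a..s, q σ * x σ) := h t ht
    _ ≤ c + ∫ s in a..t, c * (p s * exp (∫ σ in a..s, (p σ + q σ))) := by
        gcongr
        refine intervalIntegral.integral_mono_on ht.1 (hpw.intervalIntegrable_of_mem_Icc ht)
          ((continuousOn_const.mul hpE).intervalIntegrable_of_mem_Icc ht) fun s hs => ?_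
        have hs' := Icc_subset_Icc_right ht.2 hs
        rw [mul_left_comm]
        exact mul_le_mul_of_nonneg_left (hinner s hs') (hp₀ s hs')
    _ = c * (1 + ∫ s in a..t, p s * exp (∫ σ in a..s, (p σ + q σ))) := by
        rw [intervalIntegral.integral_const_mul]
        ring

theorem pachpatte_inequality_general
    (x p q η : ℝ → ℝ)
    (hx : ContinuousOn x (Ici 0)) (hp : ContinuousOn p (Ici 0))
    (hq : ContinuousOn q (Ici 0))
    (hxnn : ∀ t ∈ Ici (0:ℝ), 0 ≤ x t) (hpnn : ∀ t ∈ Ici (0:ℝ), 0 ≤ p t)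
    (hqnn : ∀ t ∈ Ici (0:ℝ), 0 ≤ q t)
    (hηmono : MonotoneOn η (Ici 0))
    (hineq : ∀ t ∈ Ici (0:ℝ),
      x t ≤ η t + ∫ s in (0:ℝ)..t, p s * (x s + ∫ σ in (0:ℝ)..s, q σ * x σ)) :
    ∀ t ∈ Ici (0:ℝ),
      x t ≤ η t * (1 + ∫ s in (0:ℝ)..t,
        p s * Real.exp (∫ σ in (0:ℝ)..s, (p σ + q σ))) := by
  intro T hT
  have sub : Icc 0 T ⊆ Ici (0:ℝ) := Icc_subset_Ici_self
  refine pachpatte_inequality_const (hx.mono sub) (hp.mono sub) (hq.mono sub)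
    (fun t ht => hxnn t (sub ht)) (fun t ht => hpnn t (sub ht)) (fun t ht => hqnn t (sub ht))
    (fun t ht => ?_) T ⟨hT, le_rfl⟩
  have hηt : η t ≤ η T := hηmono (sub ht) hT ht.2
  linarith [hineq t (sub ht)]

/-- Pachpatte's integral inequality: if `x, p, q` are nonnegative continuous functions on
`[0,∞)`, `η` is a positive nondecreasing continuous function on `[0,∞)`, and
`x(t) ≤ η(t) + ∫₀ᵗ p(s)[x(s) + ∫₀ˢ q(σ)x(σ)dσ]ds` for all `t ≥ 0`, then
`x(t) ≤ η(t)[1 + ∫₀ᵗ p(s) exp(∫₀ˢ (p(σ)+q(σ))dσ) ds]` for all `t ≥ 0`. -/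
theorem pachpatte_inequality
    (x p q η : ℝ → ℝ)
    (hx : ContinuousOn x (Ici 0)) (hp : ContinuousOn p (Ici 0))
    (hq : ContinuousOn q (Ici 0)) (hη : ContinuousOn η (Ici 0))
    (hxnn : ∀ t ∈ Ici (0:ℝ), 0 ≤ x t) (hpnn : ∀ t ∈ Ici (0:ℝ), 0 ≤ p t)
    (hqnn : ∀ t ∈ Ici (0:ℝ), 0 ≤ q t)
    (hηpos : ∀ t ∈ Ici (0:ℝ), 0 < η t) (hηmono : MonotoneOn η (Ici 0))
    (hineq : ∀ t ∈ Ici (0:ℝ),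
      x t ≤ η t + ∫ s in (0:ℝ)..t, p s * (x s + ∫ σ in (0:ℝ)..s, q σ * x σ)) :
    ∀ t ∈ Ici (0:ℝ),
      x t ≤ η t * (1 + ∫ s in (0:ℝ)..t,
        p s * Real.exp (∫ σ in (0:ℝ)..s, (p σ + q σ))) :=
  pachpatte_inequality_general x p q η hx hp hq hxnn hpnn hqnn hηmono hineq
end

section
/- Mittag-Leffler invariance under the ψ-fractional integral: for 0 < α < 1 and every t ∈ (a,b], (1/Γ(α)) ∫_a^t ψ'(s)(ψ(t)−ψ(s))^{α−1} E_α( (ψ(s)−ψ(a))^{α} ) ds ≤ E_α( (ψ(t)−ψ(a))^{α} ). -/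
/-!
Substituting `u = ψ s` turns the left-hand side into
`Γ(α)⁻¹ ∫_c^d (d - u)^(α-1) E_α((u - c)^α) du` with `c = ψ a`, `d = ψ t`. Integrating the series
termwise, the Beta integral sends the `k`-th term `(u - c)^(αk) / Γ(αk+1)` to
`Γ(α) (d - c)^(α(k+1)) / Γ(α(k+1)+1)`, a multiple of the `(k+1)`-st term of `E_α((d - c)^α)`.
So the left-hand side equals `E_α((ψ t - ψ a)^α) - 1`.
-/

open Real MeasureTheory Set Filter Topology

noncomputable def mittagLeffler (α z : ℝ) : ℝ :=
  ∑' k : ℕ, z ^ k / Real.Gamma (α * k + 1)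

theorem factorial_floor_le_two_mul_Gamma_add_one {y : ℝ} (hy : 0 ≤ y) :
    (⌊y⌋₊.factorial : ℝ) ≤ 2 * Gamma (y + 1) := by
  set n := ⌊y⌋₊
  have hny : (n : ℝ) ≤ y := Nat.floor_le hy
  have hyn : y < n + 1 := Nat.lt_floor_add_one y
  have hsucc : ((n + 1).factorial : ℝ) ≤ (y + 1) * Gamma (y + 1) := by
    rw [← Gamma_add_one (by linarith), ← Gamma_nat_eq_factorial]
    exact Gamma_strictMonoOn_Ici.monotoneOn (by simp; linarith) (by simp; linarith)
      (by push_cast; linarith)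
  have hΓ : 0 < Gamma (y + 1) := Gamma_pos_of_pos (by linarith)
  calc (n.factorial : ℝ) = ((n + 1).factorial : ℝ) / (n + 1) := by
        rw [Nat.factorial_succ]; push_cast; field_simp
    _ ≤ (y + 1) * Gamma (y + 1) / (n + 1) := by gcongr
    _ ≤ 2 * Gamma (y + 1) := by
        rw [div_le_iff₀ (by positivity)]; nlinarith

theorem exists_rpow_le_mul_Gamma_add_one {R : ℝ} (hR : 1 ≤ R) :
    ∃ C, ∀ y, 0 ≤ y → R ^ y ≤ C * Gamma (y + 1) := by
  obtain ⟨C, hC⟩ := (FloorSemiring.tendsto_pow_div_factorial_atTop R).bddAbove_range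
  have hC' : ∀ n : ℕ, R ^ n ≤ C * n.factorial := fun n => by
    have := hC ⟨n, rfl⟩
    rwa [div_le_iff₀ (by positivity)] at this
  have hC0 : 0 ≤ C := by simpa using (zero_le_one.trans hR).trans (by simpa using hC' 1)
  refine ⟨2 * R * C, fun y hy => ?_⟩
  set n := ⌊y⌋₊
  calc R ^ y ≤ R ^ ((n + 1 : ℕ) : ℝ) :=
        rpow_le_rpow_of_exponent_le hR (by push_cast; exact (Nat.lt_floor_add_one y).le)
    _ = R * R ^ n := by rw [rpow_natCast, pow_succ']
    _ ≤ R * (C * n.factorial) := by gcongr; exact hC' n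
    _ ≤ R * (C * (2 * Gamma (y + 1))) := by
        gcongr; exact factorial_floor_le_two_mul_Gamma_add_one hy
    _ = 2 * R * C * Gamma (y + 1) := by ring

theorem summable_pow_div_Gamma_mul_add_one {α : ℝ} (hα : 0 < α) (z : ℝ) :
    Summable fun k : ℕ => z ^ k / Gamma (α * k + 1) := by
  set r := |z| + 1
  have hr : 0 < r := by positivity
  obtain ⟨C, hC⟩ := exists_rpow_le_mul_Gamma_add_one
    (one_le_rpow (x := r) (by linarith [abs_nonneg z]) (inv_pos.2 hα).le)
  refine Summable.of_norm_bounded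
    ((summable_geometric_of_lt_one (by positivity) ((div_lt_one hr).2 (lt_add_one _))).mul_left C)
    fun k => ?_
  have hΓ : 0 < Gamma (α * k + 1) := Gamma_pos_of_pos (by positivity)
  have hrk : r ^ k ≤ C * Gamma (α * k + 1) := by
    have := hC (α * k) (by positivity)
    rwa [← rpow_mul hr.le, inv_mul_cancel_left₀ hα.ne', rpow_natCast] at this
  rw [norm_div, norm_pow, Real.norm_eq_abs, Real.norm_of_nonneg hΓ.le, div_le_iff₀ hΓ, div_pow]
  calc |z| ^ k = |z| ^ k / r ^ k * r ^ k := by field_simp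
    _ ≤ |z| ^ k / r ^ k * (C * Gamma (α * k + 1)) := by gcongr
    _ = C * (|z| ^ k / r ^ k) * Gamma (α * k + 1) := by ring

theorem hasSum_mittagLeffler_sub_one {α : ℝ} (hα : 0 < α) (z : ℝ) :
    HasSum (fun k : ℕ => z ^ (k + 1) / Gamma (α * (k + 1 : ℕ) + 1)) (mittagLeffler α z - 1) := by
  have h := (summable_pow_div_Gamma_mul_add_one hα z).hasSum
  rw [← hasSum_nat_add_iff' 1] at h
  simpa [mittagLeffler, Gamma_one] using h

theorem integral_rpow_mul_one_sub_rpow {u v : ℝ} (hu : 0 < u) (hv : 0 < v) :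
    ∫ x in (0 : ℝ)..1, x ^ (u - 1) * (1 - x) ^ (v - 1) = Gamma u * Gamma v / Gamma (u + v) := by
  have hB : Complex.betaIntegral u v = ↑(∫ x in (0 : ℝ)..1, x ^ (u - 1) * (1 - x) ^ (v - 1)) := by
    rw [Complex.betaIntegral, ← intervalIntegral.integral_ofReal]
    refine intervalIntegral.integral_congr fun x hx => ?_
    rw [uIcc_of_le zero_le_one] at hx
    simp only [Complex.ofReal_mul, Complex.ofReal_cpow hx.1, Complex.ofReal_sub,
      Complex.ofReal_cpow (sub_nonneg.2 hx.2), Complex.ofReal_one]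
  rw [← ProbabilityTheory.beta, ProbabilityTheory.beta_eq_betaIntegralReal u v hu hv, hB,
    Complex.ofReal_re]

theorem integral_sub_rpow_mul_rpow_sub {c d α β : ℝ} (hcd : c < d) (hα : 0 < α) (hβ : -1 < β) :
    ∫ u in c..d, (d - u) ^ (α - 1) * (u - c) ^ β
      = Gamma α * Gamma (β + 1) / Gamma (α + β + 1) * (d - c) ^ (α + β) := by
  have hdc : 0 < d - c := sub_pos.2 hcd
  have hsubst := intervalIntegral.integral_comp_mul_add (a := 0) (b := 1)
    (fun u => (d - u) ^ (α - 1) * (u - c) ^ β) hdc.ne' c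
  simp only [mul_zero, zero_add, mul_one, sub_add_cancel, smul_eq_mul] at hsubst
  have hscaled : ∫ x in (0 : ℝ)..1, (d - ((d - c) * x + c)) ^ (α - 1) * ((d - c) * x + c - c) ^ β
      = (d - c) ^ (α - 1 + β) * ∫ x in (0 : ℝ)..1, x ^ (β + 1 - 1) * (1 - x) ^ (α - 1) := by
    rw [← intervalIntegral.integral_const_mul]
    refine intervalIntegral.integral_congr fun x hx => ?_
    rw [uIcc_of_le zero_le_one] at hx
    rw [show d - ((d - c) * x + c) = (d - c) * (1 - x) by ring, add_sub_cancel_right,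
      add_sub_cancel_right, mul_rpow hdc.le (sub_nonneg.2 hx.2), mul_rpow hdc.le hx.1,
      rpow_add hdc]
    ring
  rw [hscaled, integral_rpow_mul_one_sub_rpow (by linarith) hα, eq_inv_mul_iff_mul_eq₀ hdc.ne']
    at hsubst
  rw [← hsubst, show β + 1 + α = α + β + 1 by ring, show α + β = 1 + (α - 1 + β) by ring,
    rpow_add hdc 1, rpow_one]
  ring

theorem intervalIntegrable_sub_rpow_mul_rpow_sub {c d α β : ℝ} (hcd : c < d) (hα : 0 < α)
    (hβ : -1 < β) :
    IntervalIntegrable (fun u => (d - u) ^ (α - 1) * (u - c) ^ β) volume c d := by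
  -- `∫` is `0` on non-integrable functions, so the positive value computed above forces integrability.
  refine intervalIntegral.intervalIntegrable_of_integral_ne_zero ?_
  rw [integral_sub_rpow_mul_rpow_sub hcd hα hβ]
  have : 0 < α + β + 1 := by linarith
  have : 0 < β + 1 := by linarith
  have : 0 < d - c := sub_pos.2 hcd
  positivity

theorem integral_sub_rpow_mul_mittagLeffler {c d α : ℝ} (hcd : c < d) (hα : 0 < α) :
    ∫ u in c..d, (d - u) ^ (α - 1) * mittagLeffler α ((u - c) ^ α)
      = Gamma α * (mittagLeffler α ((d - c) ^ α) - 1) := by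
  set F : ℕ → ℝ → ℝ := fun k u => (d - u) ^ (α - 1) * (u - c) ^ (α * k) / Gamma (α * k + 1)
  have hk : ∀ k : ℕ, -1 < α * k := fun k => by linarith [mul_nonneg hα.le k.cast_nonneg]
  have hF_int : ∀ k, IntegrableOn (F k) (Ioc c d) := fun k =>
    ((intervalIntegrable_sub_rpow_mul_rpow_sub hcd hα (hk k)).div_const _).1
  have hF_integral : ∀ k, ∫ u in Ioc c d, F k u
      = Gamma α * (((d - c) ^ α) ^ (k + 1) / Gamma (α * (k + 1 : ℕ) + 1)) := fun k => by
    rw [← intervalIntegral.integral_of_le hcd.le, intervalIntegral.integral_div,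
      integral_sub_rpow_mul_rpow_sub hcd hα (hk k), ← rpow_natCast,
      ← rpow_mul (sub_pos.2 hcd).le]
    have : 0 < Gamma (α * k + 1) := Gamma_pos_of_pos (by linarith [hk k])
    push_cast
    field_simp
    ring_nf
  have hF_norm : ∀ k, ∫ u in Ioc c d, ‖F k u‖ = ∫ u in Ioc c d, F k u := fun k =>
    setIntegral_congr_fun measurableSet_Ioc fun u hu => by
      have : 0 ≤ d - u := sub_nonneg.2 hu.2
      have : 0 ≤ u - c := sub_nonneg.2 hu.1.le
      have : 0 < Gamma (α * k + 1) := Gamma_pos_of_pos (by linarith [hk k])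
      exact Real.norm_of_nonneg (by positivity)
  have hseries := (hasSum_mittagLeffler_sub_one hα ((d - c) ^ α)).mul_left (Gamma α)
  have hsum := hasSum_integral_of_summable_integral_norm hF_int
    (by simpa only [hF_norm, hF_integral] using hseries.summable)
  have htsum : ∀ u ∈ Ioc c d, ∑' k, F k u = (d - u) ^ (α - 1) * mittagLeffler α ((u - c) ^ α) :=
    fun u hu => by
      rw [mittagLeffler, ← tsum_mul_left]
      refine tsum_congr fun k => ?_
      rw [← rpow_natCast, ← rpow_mul (sub_nonneg.2 hu.1.le)]
      exact mul_div_assoc _ _ _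
  rw [intervalIntegral.integral_of_le hcd.le, ← setIntegral_congr_fun measurableSet_Ioc htsum]
  exact hsum.unique (by simpa only [hF_integral] using hseries)

theorem integral_deriv_smul_comp_of_monotoneOn {E : Type*} [NormedAddCommGroup E]
    [NormedSpace ℝ E] {f f' : ℝ → ℝ} {a b : ℝ} (hab : a ≤ b)
    (hf : ∀ x ∈ Icc a b, HasDerivWithinAt f (f' x) (Icc a b) x) (hmono : MonotoneOn f (Icc a b))
    (g : ℝ → E) :
    ∫ x in a..b, f' x • g (f x) = ∫ u in f a..f b, g u := by
  have hcont : ContinuousOn f (Icc a b) := fun x hx => (hf x hx).continuousWithinAt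
  rw [intervalIntegral.integral_of_le hab,
    intervalIntegral.integral_of_le (hmono (left_mem_Icc.2 hab) (right_mem_Icc.2 hab) hab),
    ← integral_Icc_eq_integral_Ioc, ← integral_Icc_eq_integral_Ioc,
    ← hcont.image_Icc_of_monotoneOn hab hmono,
    integral_image_eq_integral_deriv_smul_of_monotoneOn measurableSet_Icc hf hmono g]

theorem psiInt_mittagLeffler_le_general
    (a b : ℝ) (ψ ψ' : ℝ → ℝ)
    (hψ : ∀ t ∈ Icc a b, HasDerivWithinAt ψ (ψ' t) (Icc a b) t)
    (hψmono : StrictMonoOn ψ (Icc a b))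
    (α : ℝ) (hα0 : 0 < α) :
    ∀ t ∈ Ioc a b,
      (Real.Gamma α)⁻¹
          * ∫ s in a..t, ψ' s * (ψ t - ψ s) ^ (α - 1)
              * mittagLeffler α ((ψ s - ψ a) ^ α)
        ≤ mittagLeffler α ((ψ t - ψ a) ^ α) := by
  rintro t ⟨hat, htb⟩
  have hsub : Icc a t ⊆ Icc a b := Icc_subset_Icc_right htb
  have hψat : ψ a < ψ t := hψmono (hsub (left_mem_Icc.2 hat.le)) (hsub (right_mem_Icc.2 hat.le)) hat
  have hcov := integral_deriv_smul_comp_of_monotoneOn hat.le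
    (fun s hs => (hψ s (hsub hs)).mono hsub) (hψmono.monotoneOn.mono hsub)
    fun u => (ψ t - u) ^ (α - 1) * mittagLeffler α ((u - ψ a) ^ α)
  simp only [smul_eq_mul, ← mul_assoc] at hcov
  rw [hcov, integral_sub_rpow_mul_mittagLeffler hψat hα0,
    inv_mul_cancel_left₀ (Gamma_pos_of_pos hα0).ne']
  linarith

/-- Mittag-Leffler invariance under the ψ-fractional integral:
`I^{α;ψ}[ E_α((ψ(·)-ψ(a))^α) ](t) ≤ E_α((ψ(t)-ψ(a))^α)` for `t ∈ (a,b]`. -/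
theorem psiInt_mittagLeffler_le
    (a b : ℝ) (hab : a < b) (ψ ψ' : ℝ → ℝ)
    (hψ : ∀ t ∈ Icc a b, HasDerivWithinAt ψ (ψ' t) (Icc a b) t)
    (hψ'c : ContinuousOn ψ' (Icc a b))
    (hψ'pos : ∀ t ∈ Icc a b, 0 < ψ' t)
    (hψmono : StrictMonoOn ψ (Icc a b))
    (α : ℝ) (hα0 : 0 < α) (hα1 : α < 1) :
    ∀ t ∈ Ioc a b,
      (Real.Gamma α)⁻¹
          * ∫ s in a..t, ψ' s * (ψ t - ψ s) ^ (α - 1)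
              * mittagLeffler α ((ψ s - ψ a) ^ α)
        ≤ mittagLeffler α ((ψ t - ψ a) ^ α) :=
  psiInt_mittagLeffler_le_general a b ψ ψ' hψ hψmono α hα0
end

section
/- Contraction estimate for the solution operator: assume the hypotheses (H1)–(H2). Let u, v ∈ C([−r,b]) with u(t) = v(t) = φ(t) on [−r,0] and with their restrictions to (0,b] in C_{1−γ;ψ}[0,b]. Then ‖G_f u − G_f v‖_{C_{1−γ;ψ}[0,b]} ≤ [ 2L_f (Γ(γ)/Γ(γ+α)) (ψ(b)−ψ(0))^{α} + (2L_f L_h/(ζγ)) (Γ(γ+1)/Γ(γ+α+1)) (ψ(b)−ψ(0))^{α+1} ] · ‖u − v‖_{C_{1−γ;ψ}[0,b]}, where ζ > 0 is any constant with ψ'(s) ≥ ζ for all s ∈ [0,b]. -/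
open Real MeasureTheory Set Filter Topology

/-- `F_{u,g,h}(s) = f(s, u(s), u(g(s)), ∫₀ˢ h(s,τ,u(τ),u(g(τ))) dτ)`. -/
noncomputable def Ffun (f h : ℝ → ℝ → ℝ → ℝ → ℝ) (g : ℝ → ℝ) (u : ℝ → ℝ) (s : ℝ) : ℝ :=
  f s (u s) (u (g s)) (∫ τ in (0:ℝ)..s, h s τ (u τ) (u (g τ)))

/-- The solution operator `G_f`: `G_f u(t) = φ(t)` for `t ≤ 0` and
`G_f u(t) = ((ψ(t)-ψ(0))^{γ-1}/Γ(γ)) u₀ + (1/Γ(α)) ∫₀ᵗ ψ'(s)(ψ(t)-ψ(s))^{α-1} F_{u,g,h}(s) ds`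
for `t > 0`. -/
noncomputable def Gf (ψ ψ' : ℝ → ℝ) (α γ u₀ : ℝ) (φ : ℝ → ℝ)
    (f h : ℝ → ℝ → ℝ → ℝ → ℝ) (g : ℝ → ℝ) (u : ℝ → ℝ) (t : ℝ) : ℝ :=
  if t ≤ 0 then φ t
  else (ψ t - ψ 0) ^ (γ - 1) / Real.Gamma γ * u₀
    + (Real.Gamma α)⁻¹ * ∫ s in (0:ℝ)..t, ψ' s * (ψ t - ψ s) ^ (α - 1) * Ffun f h g u s

/-- The weighted norm `‖ω‖_{C_{1-γ;ψ}[0,b]} = sup_{t∈(0,b]} |(ψ(t)-ψ(0))^{1-γ} ω(t)|`. -/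
noncomputable def wnorm (ψ : ℝ → ℝ) (γ b : ℝ) (ω : ℝ → ℝ) : ℝ :=
  sSup ((fun t => |(ψ t - ψ 0) ^ (1 - γ) * ω t|) '' Ioc 0 b)

/-!
Write `N = ‖u - v‖_{C_{1-γ;ψ}}`, so that `|u s - v s| ≤ (ψ s - ψ 0)^(γ-1) N`. Since `g` maps
into the initial segment, where `u = v = φ`, the delayed arguments cancel, and the Lipschitz
bounds give `|F_u s - F_v s| ≤ L_f N (ψ s - ψ 0)^(γ-1) + (L_f L_h N / (ζγ)) (ψ s - ψ 0)^γ`;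
for the memory term, `ζ ≤ ψ'` bounds `∫₀ˢ (ψ τ - ψ 0)^(γ-1) dτ` by
`ζ⁻¹ ∫₀ˢ ψ' τ (ψ τ - ψ 0)^(γ-1) dτ = (ψ s - ψ 0)^γ / (ζγ)`.
The substitution `x = ψ s` turns the `ψ`-fractional integral of `(ψ - ψ 0)^(c-1)` into a Beta
integral, equal to `Γ(c) / Γ(c + α) · (ψ t - ψ 0)^(c+α-1)`. Applying this with `c = γ` and
`c = γ + 1`, multiplying by the weight `(ψ t - ψ 0)^(1-γ)` and using that `ψ` is increasing
gives the estimate.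
-/

open intervalIntegral

theorem integral_sub_rpow_mul_rpow_sub_s12 {a c p q : ℝ} (ha : 0 < a) (hc : 0 < c) (hpq : p < q) :
    ∫ x in p..q, (q - x) ^ (a - 1) * (x - p) ^ (c - 1)
      = (q - p) ^ (a + c - 1) * (Gamma a * Gamma c / Gamma (a + c)) := by
  have hT : 0 < q - p := sub_pos.2 hpq
  have hshift : ∫ x in p..q, (q - x) ^ (a - 1) * (x - p) ^ (c - 1)
      = ∫ x in (0:ℝ)..q - p, x ^ (c - 1) * (q - p - x) ^ (a - 1) := by
    rw [← sub_self p, ← integral_comp_sub_right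
      (fun x => x ^ (c - 1) * (q - p - x) ^ (a - 1))]
    refine integral_congr fun x _ => ?_
    simp only [sub_sub_sub_cancel_right]
    ring
  apply Complex.ofReal_injective
  rw [hshift, ← integral_ofReal]
  have hcongr : ∫ x in (0:ℝ)..q - p, ((x ^ (c - 1) * (q - p - x) ^ (a - 1) : ℝ) : ℂ)
      = ∫ x in (0:ℝ)..q - p, (x : ℂ) ^ ((c : ℂ) - 1) * (((q - p : ℝ) : ℂ) - x) ^ ((a : ℂ) - 1) := by
    refine integral_congr fun x hx => ?_
    rw [uIcc_of_le hT.le] at hx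
    push_cast
    rw [Complex.ofReal_cpow hx.1, Complex.ofReal_cpow (by linarith [hx.2])]
    push_cast
    ring
  rw [hcongr, Complex.betaIntegral_scaled _ _ hT,
    Complex.betaIntegral_eq_Gamma_mul_div _ _ (by simpa using hc) (by simpa using ha)]
  push_cast
  rw [Complex.ofReal_cpow hT.le, ← Complex.ofReal_add, Complex.Gamma_ofReal, Complex.Gamma_ofReal,
    Complex.Gamma_ofReal]
  push_cast
  ring_nf

theorem intervalIntegrable_sub_rpow_mul_rpow_sub_s12 {a c p q : ℝ} (ha : 0 < a) (hc : 0 < c)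
    (hpq : p < q) :
    IntervalIntegrable (fun x => (q - x) ^ (a - 1) * (x - p) ^ (c - 1)) volume p q := by
  -- a non-integrable function would have integral `0`, but the Beta integral is positive
  refine intervalIntegrable_of_integral_ne_zero ?_
  rw [integral_sub_rpow_mul_rpow_sub_s12 ha hc hpq]
  have := sub_pos.2 hpq
  positivity

structure AdmissibleOn (ψ ψ' : ℝ → ℝ) (t : ℝ) : Prop where
  continuousOn : ContinuousOn ψ (Icc 0 t)
  hasDerivAt : ∀ x ∈ Ioo 0 t, HasDerivAt ψ (ψ' x) x
  deriv_nonneg : ∀ x ∈ Icc 0 t, 0 ≤ ψ' x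
  strictMonoOn : StrictMonoOn ψ (Icc 0 t)

namespace AdmissibleOn

variable {ψ ψ' : ℝ → ℝ} {t α c : ℝ}

theorem of_hasDerivWithinAt {b : ℝ}
    (hψ : ∀ x ∈ Icc 0 b, HasDerivWithinAt ψ (ψ' x) (Icc 0 b) x)
    (hψ' : ∀ x ∈ Icc 0 b, 0 < ψ' x) (hmono : StrictMonoOn ψ (Icc 0 b)) (htb : t ≤ b) :
    AdmissibleOn ψ ψ' t :=
  have hsub : Icc 0 t ⊆ Icc 0 b := Icc_subset_Icc_right htb
  { continuousOn := fun x hx => (hψ x (hsub hx)).continuousWithinAt.mono hsub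
    hasDerivAt := fun x hx =>
      (hψ x (hsub (Ioo_subset_Icc_self hx))).hasDerivAt (Icc_mem_nhds hx.1 (hx.2.trans_le htb))
    deriv_nonneg := fun x hx => (hψ' x (hsub hx)).le
    strictMonoOn := hmono.mono hsub }

theorem sub_pos (hψ : AdmissibleOn ψ ψ' t) {s : ℝ} (hs : s ∈ Ioc 0 t) : 0 < ψ s - ψ 0 :=
  _root_.sub_pos.2 (hψ.strictMonoOn ⟨le_rfl, hs.1.le.trans hs.2⟩ ⟨hs.1.le, hs.2⟩ hs.1)

theorem sub_nonneg (hψ : AdmissibleOn ψ ψ' t) {s r : ℝ} (hs : s ∈ Icc 0 t) (hr : r ∈ Icc 0 t)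
    (hsr : s ≤ r) : 0 ≤ ψ r - ψ s :=
  _root_.sub_nonneg.2 (hψ.strictMonoOn.monotoneOn hs hr hsr)

theorem integral_comp_eq (hψ : AdmissibleOn ψ ψ' t) (ht : 0 < t) (G : ℝ → ℝ) :
    ∫ s in (0:ℝ)..t, (G ∘ ψ) s * ψ' s = ∫ x in ψ 0..ψ t, G x :=
  integral_comp_mul_deriv_of_deriv_nonneg (by rw [uIcc_of_le ht.le]; exact hψ.continuousOn)
    (by rw [min_eq_left ht.le, max_eq_right ht.le]; exact hψ.hasDerivAt)
    (by rw [min_eq_left ht.le, max_eq_right ht.le]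
        exact fun x hx => hψ.deriv_nonneg x (Ioo_subset_Icc_self hx))

theorem intervalIntegrable_comp_iff (hψ : AdmissibleOn ψ ψ' t) (ht : 0 < t) {G : ℝ → ℝ} :
    IntervalIntegrable (fun s => (G ∘ ψ) s * ψ' s) volume 0 t ↔
      IntervalIntegrable G volume (ψ 0) (ψ t) :=
  integrable_comp_mul_deriv_iff_of_deriv_nonneg (by rw [uIcc_of_le ht.le]; exact hψ.continuousOn)
    (by rw [min_eq_left ht.le, max_eq_right ht.le]; exact hψ.hasDerivAt)
    (by rw [min_eq_left ht.le, max_eq_right ht.le]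
        exact fun x hx => hψ.deriv_nonneg x (Ioo_subset_Icc_self hx))

theorem kernel_nonneg (hψ : AdmissibleOn ψ ψ' t) {s : ℝ} (hs : s ∈ Icc 0 t) :
    0 ≤ ψ' s * (ψ t - ψ s) ^ (α - 1) :=
  mul_nonneg (hψ.deriv_nonneg s hs)
    (rpow_nonneg (hψ.sub_nonneg hs (right_mem_Icc.2 (hs.1.trans hs.2)) hs.2) _)

theorem kernel_mul_rpow_eq_comp :
    (fun s => ψ' s * (ψ t - ψ s) ^ (α - 1) * (ψ s - ψ 0) ^ (c - 1))
      = fun s => ((fun x => (ψ t - x) ^ (α - 1) * (x - ψ 0) ^ (c - 1)) ∘ ψ) s * ψ' s := by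
  funext s
  simp only [Function.comp]
  ring

theorem intervalIntegrable_kernel_mul_rpow (hψ : AdmissibleOn ψ ψ' t) (ht : 0 < t)
    (hα : 0 < α) (hc : 0 < c) :
    IntervalIntegrable (fun s => ψ' s * (ψ t - ψ s) ^ (α - 1) * (ψ s - ψ 0) ^ (c - 1))
      volume 0 t := by
  rw [kernel_mul_rpow_eq_comp, hψ.intervalIntegrable_comp_iff ht]
  exact intervalIntegrable_sub_rpow_mul_rpow_sub_s12 hα hc
    (hψ.strictMonoOn (left_mem_Icc.2 ht.le) (right_mem_Icc.2 ht.le) ht)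

theorem integral_kernel_mul_rpow (hψ : AdmissibleOn ψ ψ' t) (ht : 0 < t)
    (hα : 0 < α) (hc : 0 < c) :
    ∫ s in (0:ℝ)..t, ψ' s * (ψ t - ψ s) ^ (α - 1) * (ψ s - ψ 0) ^ (c - 1)
      = (ψ t - ψ 0) ^ (α + c - 1) * (Gamma α * Gamma c / Gamma (α + c)) := by
  rw [kernel_mul_rpow_eq_comp, hψ.integral_comp_eq ht]
  exact integral_sub_rpow_mul_rpow_sub_s12 hα hc
    (hψ.strictMonoOn (left_mem_Icc.2 ht.le) (right_mem_Icc.2 ht.le) ht)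

theorem intervalIntegrable_kernel_mul (hψ : AdmissibleOn ψ ψ' t) (ht : 0 < t) (hα : 0 < α)
    {F : ℝ → ℝ} (hF : ContinuousOn F (Icc 0 t)) :
    IntervalIntegrable (fun s => ψ' s * (ψ t - ψ s) ^ (α - 1) * F s) volume 0 t := by
  have h := hψ.intervalIntegrable_kernel_mul_rpow ht hα one_pos
  simp only [sub_self, rpow_zero, mul_one] at h
  exact h.mul_continuousOn (by rwa [uIcc_of_le ht.le])

end AdmissibleOn

/-- The `ψ`-Riemann–Liouville fractional integral `I^{α;ψ}_{0+} F`, the integral part of `Gf`. -/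
noncomputable def fracIntegral (ψ ψ' : ℝ → ℝ) (α : ℝ) (F : ℝ → ℝ) (t : ℝ) : ℝ :=
  (Gamma α)⁻¹ * ∫ s in (0:ℝ)..t, ψ' s * (ψ t - ψ s) ^ (α - 1) * F s

section fracIntegral

variable {ψ ψ' F G : ℝ → ℝ} {t α : ℝ}

theorem fracIntegral_const_mul (A : ℝ) :
    fracIntegral ψ ψ' α (fun s => A * F s) t = A * fracIntegral ψ ψ' α F t := by
  simp only [fracIntegral, mul_left_comm _ A, intervalIntegral.integral_const_mul]

theorem fracIntegral_add
    (hF : IntervalIntegrable (fun s => ψ' s * (ψ t - ψ s) ^ (α - 1) * F s) volume 0 t)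
    (hG : IntervalIntegrable (fun s => ψ' s * (ψ t - ψ s) ^ (α - 1) * G s) volume 0 t) :
    fracIntegral ψ ψ' α (fun s => F s + G s) t
      = fracIntegral ψ ψ' α F t + fracIntegral ψ ψ' α G t := by
  simp only [fracIntegral, mul_add, integral_add hF hG]

theorem fracIntegral_sub
    (hF : IntervalIntegrable (fun s => ψ' s * (ψ t - ψ s) ^ (α - 1) * F s) volume 0 t)
    (hG : IntervalIntegrable (fun s => ψ' s * (ψ t - ψ s) ^ (α - 1) * G s) volume 0 t) :
    fracIntegral ψ ψ' α (fun s => F s - G s) t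
      = fracIntegral ψ ψ' α F t - fracIntegral ψ ψ' α G t := by
  simp only [fracIntegral, mul_sub, integral_sub hF hG]

namespace AdmissibleOn

theorem fracIntegral_rpow (hψ : AdmissibleOn ψ ψ' t) (ht : 0 < t) (hα : 0 < α) {c : ℝ}
    (hc : 0 < c) :
    fracIntegral ψ ψ' α (fun s => (ψ s - ψ 0) ^ (c - 1)) t
      = Gamma c / Gamma (c + α) * (ψ t - ψ 0) ^ (c + α - 1) := by
  rw [fracIntegral, hψ.integral_kernel_mul_rpow ht hα hc, add_comm α c]
  field_simp [(Gamma_pos_of_pos hα).ne']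

theorem abs_fracIntegral_le (hψ : AdmissibleOn ψ ψ' t) (ht : 0 < t) (hα : 0 < α)
    (hF : IntervalIntegrable (fun s => ψ' s * (ψ t - ψ s) ^ (α - 1) * F s) volume 0 t)
    (hG : IntervalIntegrable (fun s => ψ' s * (ψ t - ψ s) ^ (α - 1) * G s) volume 0 t)
    (hFG : ∀ s ∈ Icc 0 t, |F s| ≤ G s) :
    |fracIntegral ψ ψ' α F t| ≤ fracIntegral ψ ψ' α G t := by
  rw [fracIntegral, fracIntegral, abs_mul, abs_of_pos (inv_pos.2 (Gamma_pos_of_pos hα))]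
  gcongr
  refine (abs_integral_le_integral_abs ht.le).trans (integral_mono_on ht.le hF.abs hG ?_)
  intro s hs
  rw [abs_mul, abs_of_nonneg (hψ.kernel_nonneg hs)]
  exact mul_le_mul_of_nonneg_left (hFG s hs) (hψ.kernel_nonneg hs)

theorem intervalIntegrable_kernel_mul_two_rpow (hψ : AdmissibleOn ψ ψ' t) (ht : 0 < t)
    (hα : 0 < α) {γ : ℝ} (hγ : 0 < γ) (A B : ℝ) :
    IntervalIntegrable (fun s => ψ' s * (ψ t - ψ s) ^ (α - 1)
      * (A * (ψ s - ψ 0) ^ (γ - 1) + B * (ψ s - ψ 0) ^ γ)) volume 0 t := by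
  have hP₁ := hψ.intervalIntegrable_kernel_mul_rpow ht hα hγ
  have hP₂ := hψ.intervalIntegrable_kernel_mul_rpow ht hα (add_pos hγ one_pos)
  rw [add_sub_cancel_right] at hP₂
  convert (hP₁.const_mul A).add (hP₂.const_mul B) using 1
  funext s
  ring

theorem fracIntegral_two_rpow (hψ : AdmissibleOn ψ ψ' t) (ht : 0 < t) (hα : 0 < α) {γ : ℝ}
    (hγ : 0 < γ) (A B : ℝ) :
    fracIntegral ψ ψ' α (fun s => A * (ψ s - ψ 0) ^ (γ - 1) + B * (ψ s - ψ 0) ^ γ) t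
      = A * (Gamma γ / Gamma (γ + α)) * (ψ t - ψ 0) ^ (γ + α - 1)
        + B * (Gamma (γ + 1) / Gamma (γ + α + 1)) * (ψ t - ψ 0) ^ (γ + α) := by
  have hγ₁ : 0 < γ + 1 := add_pos hγ one_pos
  have hP₁ := hψ.intervalIntegrable_kernel_mul_rpow ht hα hγ
  have hP₂ := hψ.intervalIntegrable_kernel_mul_rpow ht hα hγ₁
  have hR₂ := hψ.fracIntegral_rpow ht hα hγ₁
  rw [add_sub_cancel_right] at hP₂ hR₂
  rw [fracIntegral_add, fracIntegral_const_mul, fracIntegral_const_mul,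
    hψ.fracIntegral_rpow ht hα hγ, hR₂, add_right_comm, add_sub_cancel_right]
  · ring
  · convert hP₁.const_mul A using 2; ring
  · convert hP₂.const_mul B using 2; ring

theorem rpow_mul_abs_fracIntegral_le (hψ : AdmissibleOn ψ ψ' t) (ht : 0 < t) (hα : 0 < α)
    {γ A B : ℝ} (hγ : 0 < γ)
    (hF : IntervalIntegrable (fun s => ψ' s * (ψ t - ψ s) ^ (α - 1) * F s) volume 0 t)
    (hFle : ∀ s ∈ Icc 0 t, |F s| ≤ A * (ψ s - ψ 0) ^ (γ - 1) + B * (ψ s - ψ 0) ^ γ) :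
    (ψ t - ψ 0) ^ (1 - γ) * |fracIntegral ψ ψ' α F t|
      ≤ A * (Gamma γ / Gamma (γ + α)) * (ψ t - ψ 0) ^ α
        + B * (Gamma (γ + 1) / Gamma (γ + α + 1)) * (ψ t - ψ 0) ^ (α + 1) := by
  have hX : 0 < ψ t - ψ 0 := hψ.sub_pos ⟨ht, le_rfl⟩
  have e₁ : (ψ t - ψ 0) ^ (1 - γ) * (ψ t - ψ 0) ^ (γ + α - 1) = (ψ t - ψ 0) ^ α := by
    rw [← rpow_add hX]; ring_nf
  have e₂ : (ψ t - ψ 0) ^ (1 - γ) * (ψ t - ψ 0) ^ (γ + α) = (ψ t - ψ 0) ^ (α + 1) := by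
    rw [← rpow_add hX]; ring_nf
  calc (ψ t - ψ 0) ^ (1 - γ) * |fracIntegral ψ ψ' α F t|
      ≤ (ψ t - ψ 0) ^ (1 - γ) * fracIntegral ψ ψ' α
          (fun s => A * (ψ s - ψ 0) ^ (γ - 1) + B * (ψ s - ψ 0) ^ γ) t := by
        gcongr
        exact hψ.abs_fracIntegral_le ht hα hF
          (hψ.intervalIntegrable_kernel_mul_two_rpow ht hα hγ A B) hFle
    _ = _ := by
        rw [hψ.fracIntegral_two_rpow ht hα hγ]
        linear_combination (A * (Gamma γ / Gamma (γ + α))) * e₁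
          + (B * (Gamma (γ + 1) / Gamma (γ + α + 1))) * e₂

end AdmissibleOn

end fracIntegral

theorem AdmissibleOn.abs_integral_le_of_abs_le_rpow {ψ ψ' D : ℝ → ℝ} {s ζ γ K : ℝ}
    (hψ : AdmissibleOn ψ ψ' s) (hs : 0 ≤ s) (hζ : 0 < ζ) (hζψ : ∀ x ∈ Icc 0 s, ζ ≤ ψ' x)
    (hγ : 0 < γ) (hK : 0 ≤ K) (hD : IntervalIntegrable D volume 0 s)
    (hDle : ∀ τ ∈ Icc 0 s, |D τ| ≤ K * (ψ τ - ψ 0) ^ (γ - 1)) :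
    |∫ τ in (0:ℝ)..s, D τ| ≤ K * (ψ s - ψ 0) ^ γ / (ζ * γ) := by
  rcases hs.eq_or_lt with rfl | hs
  · rw [integral_same, abs_zero, sub_self]
    positivity
  -- the case `α = 1` of the kernel integral
  have hP := hψ.intervalIntegrable_kernel_mul_rpow hs one_pos hγ
  have hPval := hψ.integral_kernel_mul_rpow hs one_pos hγ
  simp only [sub_self, rpow_zero, mul_one] at hP hPval
  rw [Gamma_one, one_mul, add_comm, Gamma_add_one hγ.ne', add_sub_cancel_right] at hPval
  calc |∫ τ in (0:ℝ)..s, D τ| ≤ ∫ τ in (0:ℝ)..s, |D τ| := abs_integral_le_integral_abs hs.le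
    _ ≤ ∫ τ in (0:ℝ)..s, K / ζ * (ψ' τ * (ψ τ - ψ 0) ^ (γ - 1)) := by
        refine integral_mono_on hs.le hD.abs (hP.const_mul _) fun τ hτ => (hDle τ hτ).trans ?_
        have hX : 0 ≤ (ψ τ - ψ 0) ^ (γ - 1) :=
          rpow_nonneg (hψ.sub_nonneg (left_mem_Icc.2 hs.le) hτ hτ.1) _
        rw [div_mul_eq_mul_div, le_div_iff₀ hζ]
        have := mul_le_mul_of_nonneg_left (hζψ τ hτ) (mul_nonneg hK hX)
        linarith
    _ = K * (ψ s - ψ 0) ^ γ / (ζ * γ) := by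
        rw [intervalIntegral.integral_const_mul, hPval]
        field_simp

theorem continuousOn_intervalIntegral_of_continuousOn_Icc {E : Type*} [NormedAddCommGroup E]
    [NormedSpace ℝ E] {H : ℝ → ℝ → E} {a b : ℝ} (hab : a ≤ b)
    (hH : ContinuousOn (Function.uncurry H) (Icc a b ×ˢ Icc a b)) :
    ContinuousOn (fun s => ∫ τ in a..s, H s τ) (Icc a b) := by
  -- extend `H` continuously to the whole plane by projecting onto `[a, b]`
  set P : ℝ → ℝ := fun x => projIcc a b hab x
  have hP : Continuous P := continuous_subtype_val.comp continuous_projIcc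
  have hH' : Continuous (Function.uncurry fun s τ => H (P s) (P τ)) :=
    hH.comp_continuous (hP.prodMap hP) fun x => ⟨(projIcc a b hab _).2, (projIcc a b hab _).2⟩
  refine (continuous_parametric_intervalIntegral_of_continuous hH' continuous_id).continuousOn.congr
    fun s hs => integral_congr fun τ hτ => ?_
  rw [uIcc_of_le hs.1] at hτ
  simp only [P, projIcc_of_mem hab hs, projIcc_of_mem hab (Icc_subset_Icc_right hs.2 hτ)]

section Volterra

variable {f h : ℝ → ℝ → ℝ → ℝ → ℝ} {g u : ℝ → ℝ} {b : ℝ}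

theorem continuousOn_volterra_integrand
    (hh : ContinuousOn (fun p : ℝ × ℝ × ℝ × ℝ => h p.1 p.2.1 p.2.2.1 p.2.2.2)
      (Icc (0:ℝ) b ×ˢ Icc (0:ℝ) b ×ˢ (univ : Set (ℝ × ℝ))))
    (hu : ContinuousOn u (Icc 0 b)) (hug : ContinuousOn (fun s => u (g s)) (Icc 0 b)) :
    ContinuousOn (Function.uncurry fun s τ => h s τ (u τ) (u (g τ))) (Icc 0 b ×ˢ Icc 0 b) :=
  hh.comp (continuousOn_fst.prodMk (continuousOn_snd.prodMk
      ((hu.comp continuousOn_snd fun _ hp => hp.2).prodMk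
        (hug.comp continuousOn_snd fun _ hp => hp.2))))
    fun _ hp => ⟨hp.1, hp.2, mem_univ _⟩

theorem intervalIntegrable_volterra_integrand
    (hh : ContinuousOn (fun p : ℝ × ℝ × ℝ × ℝ => h p.1 p.2.1 p.2.2.1 p.2.2.2)
      (Icc (0:ℝ) b ×ˢ Icc (0:ℝ) b ×ˢ (univ : Set (ℝ × ℝ))))
    (hu : ContinuousOn u (Icc 0 b)) (hug : ContinuousOn (fun s => u (g s)) (Icc 0 b))
    {s : ℝ} (hs : s ∈ Icc 0 b) :
    IntervalIntegrable (fun τ => h s τ (u τ) (u (g τ))) volume 0 s := by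
  refine ContinuousOn.intervalIntegrable ?_
  rw [uIcc_of_le hs.1]
  exact (continuousOn_volterra_integrand hh hu hug).comp (continuousOn_const.prodMk continuousOn_id)
    fun τ hτ => ⟨hs, Icc_subset_Icc_right hs.2 hτ⟩

theorem continuousOn_Ffun (hb : 0 ≤ b)
    (hf : ContinuousOn (fun p : ℝ × ℝ × ℝ × ℝ => f p.1 p.2.1 p.2.2.1 p.2.2.2)
      (Icc (0:ℝ) b ×ˢ (univ : Set (ℝ × ℝ × ℝ))))
    (hh : ContinuousOn (fun p : ℝ × ℝ × ℝ × ℝ => h p.1 p.2.1 p.2.2.1 p.2.2.2)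
      (Icc (0:ℝ) b ×ˢ Icc (0:ℝ) b ×ˢ (univ : Set (ℝ × ℝ))))
    (hu : ContinuousOn u (Icc 0 b)) (hug : ContinuousOn (fun s => u (g s)) (Icc 0 b)) :
    ContinuousOn (Ffun f h g u) (Icc 0 b) :=
  hf.comp (continuousOn_id.prodMk (hu.prodMk (hug.prodMk
      (continuousOn_intervalIntegral_of_continuousOn_Icc hb
        (continuousOn_volterra_integrand hh hu hug)))))
    fun _ hs => ⟨hs, mem_univ _⟩

end Volterra

/-- `ω ∈ C_{1-γ;ψ}[0,b]`. -/
def MemWeightedSpace (ψ : ℝ → ℝ) (γ b : ℝ) (ω : ℝ → ℝ) : Prop :=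
  ∃ W : ℝ → ℝ, ContinuousOn W (Icc 0 b) ∧ ∀ t ∈ Ioc 0 b, W t = (ψ t - ψ 0) ^ (1 - γ) * ω t

section wnorm

variable {ψ ω : ℝ → ℝ} {γ b : ℝ}

theorem MemWeightedSpace.sub {ω' : ℝ → ℝ} (hω : MemWeightedSpace ψ γ b ω)
    (hω' : MemWeightedSpace ψ γ b ω') : MemWeightedSpace ψ γ b (fun t => ω t - ω' t) := by
  obtain ⟨W, hWc, hW⟩ := hω
  obtain ⟨W', hW'c, hW'⟩ := hω'
  exact ⟨fun t => W t - W' t, hWc.sub hW'c, fun t ht => by simp only [hW t ht, hW' t ht, mul_sub]⟩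

theorem wnorm_nonneg : 0 ≤ wnorm ψ γ b ω :=
  Real.sSup_nonneg (by rintro _ ⟨t, -, rfl⟩; exact abs_nonneg _)

theorem wnorm_le {C : ℝ} (hC : 0 ≤ C) (h : ∀ t ∈ Ioc 0 b, |(ψ t - ψ 0) ^ (1 - γ) * ω t| ≤ C) :
    wnorm ψ γ b ω ≤ C :=
  Real.sSup_le (by rintro _ ⟨t, ht, rfl⟩; exact h t ht) hC

theorem abs_le_wnorm (hω : MemWeightedSpace ψ γ b ω) {t : ℝ} (ht : t ∈ Ioc 0 b) :
    |(ψ t - ψ 0) ^ (1 - γ) * ω t| ≤ wnorm ψ γ b ω := by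
  obtain ⟨W, hWc, hW⟩ := hω
  obtain ⟨C, hC⟩ := isCompact_Icc.exists_bound_of_continuousOn hWc
  refine le_csSup ⟨C, ?_⟩ (mem_image_of_mem _ ht)
  rintro _ ⟨s, hs, rfl⟩
  dsimp only
  rw [← hW s hs, ← Real.norm_eq_abs]
  exact hC s (Ioc_subset_Icc_self hs)

theorem abs_le_rpow_mul_wnorm (hω : MemWeightedSpace ψ γ b ω)
    (hψ : StrictMonoOn ψ (Icc 0 b)) (hω0 : ω 0 = 0) {t : ℝ} (ht : t ∈ Icc 0 b) :
    |ω t| ≤ (ψ t - ψ 0) ^ (γ - 1) * wnorm ψ γ b ω := by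
  rcases ht.1.eq_or_lt with rfl | ht₀
  · rw [hω0, abs_zero, sub_self]
    exact mul_nonneg (rpow_nonneg le_rfl _) wnorm_nonneg
  have hX : 0 < ψ t - ψ 0 := sub_pos.2 (hψ (left_mem_Icc.2 (ht₀.le.trans ht.2)) ht ht₀)
  have hbound := abs_le_wnorm hω ⟨ht₀, ht.2⟩
  rw [abs_mul, abs_of_pos (rpow_pos_of_pos hX _)] at hbound
  calc |ω t| = (ψ t - ψ 0) ^ (γ - 1) * ((ψ t - ψ 0) ^ (1 - γ) * |ω t|) := by
        rw [← mul_assoc, ← rpow_add hX, sub_add_sub_cancel', sub_self, rpow_zero, one_mul]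
    _ ≤ (ψ t - ψ 0) ^ (γ - 1) * wnorm ψ γ b ω := by gcongr

end wnorm

theorem abs_Ffun_sub_le {f h : ℝ → ℝ → ℝ → ℝ → ℝ} {g u v ψ ψ' : ℝ → ℝ}
    {b s ζ γ Lf Lh N : ℝ} (hs : s ∈ Icc 0 b) (hψ : AdmissibleOn ψ ψ' s) (hζ : 0 < ζ)
    (hζψ : ∀ x ∈ Icc 0 b, ζ ≤ ψ' x) (hγ : 0 < γ) (hLf : 0 ≤ Lf) (hLh : 0 ≤ Lh) (hN : 0 ≤ N)
    (hfLip : ∀ u₁ u₂ u₃ v₁ v₂ v₃ : ℝ,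
      |f s u₁ u₂ u₃ - f s v₁ v₂ v₃| ≤ Lf * (|u₁ - v₁| + |u₂ - v₂| + |u₃ - v₃|))
    (hhLip : ∀ τ ∈ Icc 0 b, ∀ u₁ u₂ v₁ v₂ : ℝ,
      |h s τ u₁ u₂ - h s τ v₁ v₂| ≤ Lh * (|u₁ - v₁| + |u₂ - v₂|))
    (hh : ContinuousOn (fun p : ℝ × ℝ × ℝ × ℝ => h p.1 p.2.1 p.2.2.1 p.2.2.2)
      (Icc (0:ℝ) b ×ˢ Icc (0:ℝ) b ×ˢ (univ : Set (ℝ × ℝ))))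
    (hu : ContinuousOn u (Icc 0 b)) (hug : ContinuousOn (fun s => u (g s)) (Icc 0 b))
    (hv : ContinuousOn v (Icc 0 b)) (hvg : ContinuousOn (fun s => v (g s)) (Icc 0 b))
    (huv : ∀ τ ∈ Icc 0 b, |u τ - v τ| ≤ (ψ τ - ψ 0) ^ (γ - 1) * N)
    (hg : ∀ τ ∈ Icc 0 b, u (g τ) = v (g τ)) :
    |Ffun f h g u s - Ffun f h g v s|
      ≤ Lf * N * (ψ s - ψ 0) ^ (γ - 1) + Lf * Lh * N / (ζ * γ) * (ψ s - ψ 0) ^ γ := by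
  have hsub : Icc 0 s ⊆ Icc 0 b := Icc_subset_Icc_right hs.2
  have hIu := intervalIntegrable_volterra_integrand hh hu hug hs
  have hIv := intervalIntegrable_volterra_integrand hh hv hvg hs
  have hint : |(∫ τ in (0:ℝ)..s, h s τ (u τ) (u (g τ))) - ∫ τ in (0:ℝ)..s, h s τ (v τ) (v (g τ))|
      ≤ Lh * N * (ψ s - ψ 0) ^ γ / (ζ * γ) := by
    rw [← integral_sub hIu hIv]
    refine hψ.abs_integral_le_of_abs_le_rpow hs.1 hζ (fun x hx => hζψ x (hsub hx)) hγ
      (mul_nonneg hLh hN) (hIu.sub hIv) fun τ hτ => ?_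
    calc |h s τ (u τ) (u (g τ)) - h s τ (v τ) (v (g τ))|
        ≤ Lh * (|u τ - v τ| + |u (g τ) - v (g τ)|) := hhLip τ (hsub hτ) _ _ _ _
      _ ≤ Lh * ((ψ τ - ψ 0) ^ (γ - 1) * N + 0) := by
        rw [hg τ (hsub hτ), sub_self, abs_zero]
        gcongr
        exact huv τ (hsub hτ)
      _ = Lh * N * (ψ τ - ψ 0) ^ (γ - 1) := by ring
  calc |Ffun f h g u s - Ffun f h g v s|
      ≤ Lf * (|u s - v s| + |u (g s) - v (g s)|
          + |(∫ τ in (0:ℝ)..s, h s τ (u τ) (u (g τ)))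
              - ∫ τ in (0:ℝ)..s, h s τ (v τ) (v (g τ))|) := hfLip _ _ _ _ _ _
    _ ≤ Lf * ((ψ s - ψ 0) ^ (γ - 1) * N + 0 + Lh * N * (ψ s - ψ 0) ^ γ / (ζ * γ)) := by
        rw [hg s hs, sub_self, abs_zero]
        gcongr
        exact huv s hs
    _ = _ := by ring

theorem Gf_sub_Gf {ψ ψ' φ g u v : ℝ → ℝ} {f h : ℝ → ℝ → ℝ → ℝ → ℝ} {α γ u₀ t : ℝ} (ht : 0 < t)
    (hu : IntervalIntegrable (fun s => ψ' s * (ψ t - ψ s) ^ (α - 1) * Ffun f h g u s) volume 0 t)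
    (hv : IntervalIntegrable (fun s => ψ' s * (ψ t - ψ s) ^ (α - 1) * Ffun f h g v s) volume 0 t) :
    Gf ψ ψ' α γ u₀ φ f h g u t - Gf ψ ψ' α γ u₀ φ f h g v t
      = fracIntegral ψ ψ' α (fun s => Ffun f h g u s - Ffun f h g v s) t := by
  rw [fracIntegral_sub hu hv]
  simp only [Gf, if_neg ht.not_ge, fracIntegral]
  ring

theorem AdmissibleOn.abs_rpow_mul_Gf_sub_le {ψ ψ' φ g u v : ℝ → ℝ}
    {f h : ℝ → ℝ → ℝ → ℝ → ℝ} {α γ u₀ t A B : ℝ} (hψ : AdmissibleOn ψ ψ' t) (ht : 0 < t)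
    (hα : 0 < α) (hγ : 0 < γ)
    (hu : ContinuousOn (Ffun f h g u) (Icc 0 t)) (hv : ContinuousOn (Ffun f h g v) (Icc 0 t))
    (huv : ∀ s ∈ Icc 0 t, |Ffun f h g u s - Ffun f h g v s|
      ≤ A * (ψ s - ψ 0) ^ (γ - 1) + B * (ψ s - ψ 0) ^ γ) :
    |(ψ t - ψ 0) ^ (1 - γ) * (Gf ψ ψ' α γ u₀ φ f h g u t - Gf ψ ψ' α γ u₀ φ f h g v t)|
      ≤ A * (Gamma γ / Gamma (γ + α)) * (ψ t - ψ 0) ^ α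
        + B * (Gamma (γ + 1) / Gamma (γ + α + 1)) * (ψ t - ψ 0) ^ (α + 1) := by
  have hFu := hψ.intervalIntegrable_kernel_mul ht hα hu
  have hFv := hψ.intervalIntegrable_kernel_mul ht hα hv
  rw [Gf_sub_Gf ht hFu hFv, abs_mul, abs_of_pos (rpow_pos_of_pos (hψ.sub_pos ⟨ht, le_rfl⟩) _)]
  exact hψ.rpow_mul_abs_fracIntegral_le ht hα hγ (by simpa only [mul_sub] using hFu.sub hFv) huv

theorem Gf_contraction_estimate_general
    (b r : ℝ) (hb : 0 < b) (hr : 0 < r) (ψ ψ' : ℝ → ℝ)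
    (hψ : ∀ t ∈ Icc (0:ℝ) b, HasDerivWithinAt ψ (ψ' t) (Icc (0:ℝ) b) t)
    (hψ'pos : ∀ t ∈ Icc (0:ℝ) b, 0 < ψ' t)
    (hψmono : StrictMonoOn ψ (Icc (0:ℝ) b))
    (α β γ : ℝ) (hα0 : 0 < α) (hα1 : α < 1) (hβ0 : 0 ≤ β)
    (hγ : γ = α + β * (1 - α)) (u₀ : ℝ)
    (φ : ℝ → ℝ)
    (f h : ℝ → ℝ → ℝ → ℝ → ℝ) (g : ℝ → ℝ)
    -- (H1)
    (hgc : ContinuousOn g (Icc (0:ℝ) b))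
    (hgmem : ∀ t ∈ Icc (0:ℝ) b, g t ∈ Icc (-r) 0)
    -- (H2)
    (hf : ContinuousOn (fun p : ℝ × ℝ × ℝ × ℝ => f p.1 p.2.1 p.2.2.1 p.2.2.2)
      (Icc (0:ℝ) b ×ˢ (univ : Set (ℝ × ℝ × ℝ))))
    (hh : ContinuousOn (fun p : ℝ × ℝ × ℝ × ℝ => h p.1 p.2.1 p.2.2.1 p.2.2.2)
      (Icc (0:ℝ) b ×ˢ Icc (0:ℝ) b ×ˢ (univ : Set (ℝ × ℝ))))
    (Lf Lh : ℝ) (hLf : 0 < Lf) (hLh : 0 < Lh)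
    (hfLip : ∀ t ∈ Icc (0:ℝ) b, ∀ u₁ u₂ u₃ v₁ v₂ v₃ : ℝ,
      |f t u₁ u₂ u₃ - f t v₁ v₂ v₃| ≤ Lf * (|u₁ - v₁| + |u₂ - v₂| + |u₃ - v₃|))
    (hhLip : ∀ t ∈ Icc (0:ℝ) b, ∀ s ∈ Icc (0:ℝ) b, ∀ u₁ u₂ v₁ v₂ : ℝ,
      |h t s u₁ u₂ - h t s v₁ v₂| ≤ Lh * (|u₁ - v₁| + |u₂ - v₂|))
    -- ζ is a positive lower bound for ψ'
    (ζ : ℝ) (hζ : 0 < ζ) (hζψ : ∀ s ∈ Icc (0:ℝ) b, ζ ≤ ψ' s)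
    -- u, v as in the statement
    (u v : ℝ → ℝ)
    (hu : ContinuousOn u (Icc (-r) b)) (hv : ContinuousOn v (Icc (-r) b))
    (huφ : ∀ t ∈ Icc (-r) 0, u t = φ t) (hvφ : ∀ t ∈ Icc (-r) 0, v t = φ t)
    (huw : ∃ W : ℝ → ℝ, ContinuousOn W (Icc (0:ℝ) b) ∧
      ∀ t ∈ Ioc (0:ℝ) b, W t = (ψ t - ψ 0) ^ (1 - γ) * u t)
    (hvw : ∃ W : ℝ → ℝ, ContinuousOn W (Icc (0:ℝ) b) ∧
      ∀ t ∈ Ioc (0:ℝ) b, W t = (ψ t - ψ 0) ^ (1 - γ) * v t) :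
    wnorm ψ γ b (fun t => Gf ψ ψ' α γ u₀ φ f h g u t - Gf ψ ψ' α γ u₀ φ f h g v t)
      ≤ (2 * Lf * (Real.Gamma γ / Real.Gamma (γ + α)) * (ψ b - ψ 0) ^ α
          + (2 * Lf * Lh / (ζ * γ)) * (Real.Gamma (γ + 1) / Real.Gamma (γ + α + 1))
            * (ψ b - ψ 0) ^ (α + 1))
        * wnorm ψ γ b (fun t => u t - v t) := by
  have hγ₀ : 0 < γ := by rw [hγ]; nlinarith
  have hψ_on : ∀ t ∈ Icc 0 b, AdmissibleOn ψ ψ' t :=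
    fun t ht => .of_hasDerivWithinAt hψ hψ'pos hψmono ht.2
  have hcont : ∀ w : ℝ → ℝ, ContinuousOn w (Icc (-r) b) →
      ContinuousOn w (Icc 0 b) ∧ ContinuousOn (fun s => w (g s)) (Icc 0 b) := fun w hw =>
    ⟨hw.mono (Icc_subset_Icc_left (neg_nonpos.2 hr.le)),
      hw.comp hgc fun s hs => Icc_subset_Icc_right hb.le (hgmem s hs)⟩
  obtain ⟨hu₀, hug⟩ := hcont u hu
  obtain ⟨hv₀, hvg⟩ := hcont v hv
  set N := wnorm ψ γ b (fun t => u t - v t)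
  have hN : 0 ≤ N := wnorm_nonneg
  have h0 : (0:ℝ) ∈ Icc (-r) 0 := ⟨neg_nonpos.2 hr.le, le_rfl⟩
  have hdiff : ∀ s ∈ Icc 0 b, |u s - v s| ≤ (ψ s - ψ 0) ^ (γ - 1) * N := fun s =>
    abs_le_rpow_mul_wnorm (MemWeightedSpace.sub huw hvw) hψmono
      (by rw [huφ 0 h0, hvφ 0 h0, sub_self])
  have hdelay : ∀ s ∈ Icc 0 b, u (g s) = v (g s) := fun s hs =>
    (huφ _ (hgmem s hs)).trans (hvφ _ (hgmem s hs)).symm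
  have hF : ∀ s ∈ Icc 0 b, |Ffun f h g u s - Ffun f h g v s|
      ≤ Lf * N * (ψ s - ψ 0) ^ (γ - 1) + Lf * Lh * N / (ζ * γ) * (ψ s - ψ 0) ^ γ := fun s hs =>
    abs_Ffun_sub_le hs (hψ_on s hs) hζ hζψ hγ₀ hLf.le hLh.le hN (hfLip s hs) (hhLip s hs)
      hh hu₀ hug hv₀ hvg hdiff hdelay
  have hY : 0 ≤ ψ b - ψ 0 := sub_nonneg.2 (hψmono.monotoneOn ⟨le_rfl, hb.le⟩ ⟨hb.le, le_rfl⟩ hb.le)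
  set Y := ψ b - ψ 0
  refine wnorm_le (by positivity) fun t ht => ?_
  have hψt := hψ_on t (Ioc_subset_Icc_self ht)
  have hsub : Icc 0 t ⊆ Icc 0 b := Icc_subset_Icc_right ht.2
  have hXY : ψ t - ψ 0 ≤ Y :=
    sub_le_sub_right (hψmono.monotoneOn (Ioc_subset_Icc_self ht) ⟨hb.le, le_rfl⟩ ht.2) _
  have hX : 0 ≤ ψ t - ψ 0 := (hψt.sub_pos ⟨ht.1, le_rfl⟩).le
  calc _ ≤ Lf * N * (Gamma γ / Gamma (γ + α)) * (ψ t - ψ 0) ^ α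
          + Lf * Lh * N / (ζ * γ) * (Gamma (γ + 1) / Gamma (γ + α + 1)) * (ψ t - ψ 0) ^ (α + 1) :=
        hψt.abs_rpow_mul_Gf_sub_le ht.1 hα0 hγ₀ ((continuousOn_Ffun hb.le hf hh hu₀ hug).mono hsub)
          ((continuousOn_Ffun hb.le hf hh hv₀ hvg).mono hsub) fun s hs => hF s (hsub hs)
    _ ≤ Lf * N * (Gamma γ / Gamma (γ + α)) * Y ^ α
          + Lf * Lh * N / (ζ * γ) * (Gamma (γ + 1) / Gamma (γ + α + 1)) * Y ^ (α + 1) := by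
        gcongr
    _ ≤ 2 * (Lf * N * (Gamma γ / Gamma (γ + α)) * Y ^ α
          + Lf * Lh * N / (ζ * γ) * (Gamma (γ + 1) / Gamma (γ + α + 1)) * Y ^ (α + 1)) :=
        le_mul_of_one_le_left (by positivity) one_le_two
    _ = _ := by ring

/-- Contraction estimate for the solution operator in the weighted norm. -/
theorem Gf_contraction_estimate
    (b r : ℝ) (hb : 0 < b) (hr : 0 < r) (ψ ψ' : ℝ → ℝ)
    (hψ : ∀ t ∈ Icc (0:ℝ) b, HasDerivWithinAt ψ (ψ' t) (Icc (0:ℝ) b) t)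
    (hψ'c : ContinuousOn ψ' (Icc (0:ℝ) b))
    (hψ'pos : ∀ t ∈ Icc (0:ℝ) b, 0 < ψ' t)
    (hψmono : StrictMonoOn ψ (Icc (0:ℝ) b))
    (α β γ : ℝ) (hα0 : 0 < α) (hα1 : α < 1) (hβ0 : 0 ≤ β) (hβ1 : β ≤ 1)
    (hγ : γ = α + β * (1 - α)) (u₀ : ℝ)
    (φ : ℝ → ℝ) (hφ : ContinuousOn φ (Icc (-r) 0))
    (f h : ℝ → ℝ → ℝ → ℝ → ℝ) (g : ℝ → ℝ)
    -- (H1)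
    (hgc : ContinuousOn g (Icc (0:ℝ) b))
    (hgmem : ∀ t ∈ Icc (0:ℝ) b, g t ∈ Icc (-r) 0)
    (hgle : ∀ t ∈ Icc (0:ℝ) b, g t ≤ t)
    -- (H2)
    (hf : ContinuousOn (fun p : ℝ × ℝ × ℝ × ℝ => f p.1 p.2.1 p.2.2.1 p.2.2.2)
      (Icc (0:ℝ) b ×ˢ (univ : Set (ℝ × ℝ × ℝ))))
    (hh : ContinuousOn (fun p : ℝ × ℝ × ℝ × ℝ => h p.1 p.2.1 p.2.2.1 p.2.2.2)
      (Icc (0:ℝ) b ×ˢ Icc (0:ℝ) b ×ˢ (univ : Set (ℝ × ℝ))))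
    (Lf Lh : ℝ) (hLf : 0 < Lf) (hLh : 0 < Lh)
    (hfLip : ∀ t ∈ Icc (0:ℝ) b, ∀ u₁ u₂ u₃ v₁ v₂ v₃ : ℝ,
      |f t u₁ u₂ u₃ - f t v₁ v₂ v₃| ≤ Lf * (|u₁ - v₁| + |u₂ - v₂| + |u₃ - v₃|))
    (hhLip : ∀ t ∈ Icc (0:ℝ) b, ∀ s ∈ Icc (0:ℝ) b, ∀ u₁ u₂ v₁ v₂ : ℝ,
      |h t s u₁ u₂ - h t s v₁ v₂| ≤ Lh * (|u₁ - v₁| + |u₂ - v₂|))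
    -- ζ is a positive lower bound for ψ'
    (ζ : ℝ) (hζ : 0 < ζ) (hζψ : ∀ s ∈ Icc (0:ℝ) b, ζ ≤ ψ' s)
    -- u, v as in the statement
    (u v : ℝ → ℝ)
    (hu : ContinuousOn u (Icc (-r) b)) (hv : ContinuousOn v (Icc (-r) b))
    (huφ : ∀ t ∈ Icc (-r) 0, u t = φ t) (hvφ : ∀ t ∈ Icc (-r) 0, v t = φ t)
    (huw : ∃ W : ℝ → ℝ, ContinuousOn W (Icc (0:ℝ) b) ∧
      ∀ t ∈ Ioc (0:ℝ) b, W t = (ψ t - ψ 0) ^ (1 - γ) * u t)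
    (hvw : ∃ W : ℝ → ℝ, ContinuousOn W (Icc (0:ℝ) b) ∧
      ∀ t ∈ Ioc (0:ℝ) b, W t = (ψ t - ψ 0) ^ (1 - γ) * v t) :
    wnorm ψ γ b (fun t => Gf ψ ψ' α γ u₀ φ f h g u t - Gf ψ ψ' α γ u₀ φ f h g v t)
      ≤ (2 * Lf * (Real.Gamma γ / Real.Gamma (γ + α)) * (ψ b - ψ 0) ^ α
          + (2 * Lf * Lh / (ζ * γ)) * (Real.Gamma (γ + 1) / Real.Gamma (γ + α + 1))
            * (ψ b - ψ 0) ^ (α + 1))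
        * wnorm ψ γ b (fun t => u t - v t) :=
  Gf_contraction_estimate_general b r hb hr ψ ψ' hψ hψ'pos hψmono α β γ hα0 hα1 hβ0 hγ u₀ φ f h g
    hgc hgmem hf hh Lf Lh hLf hLh hfLip hhLip ζ hζ hζψ u v hu hv huφ hvφ huw hvw
end
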